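/- arXiv:math/0405024 — 7 statements merged into one kernel-verified Lean document; each statement's English description precedes it below -/
import Mathlib

section
/- Let n ≥ 1 and suppose that for all integers 1 ≤ a, b < c ≤ n one is given smooth functions Γ_{ab}^c : ℝ^{c−1} → ℝ. Then for every u⁰, u¹ ∈ ℝⁿ there exists a unique smooth curve γ = (u_1, …, u_n) : ℝ → ℝⁿ, defined on all of ℝ, such that γ(0) = u⁰, γ′(0) = u¹, and for every c ∈ {1,…,n} and every t ∈ ℝ, u_c″(t) + Σ_{a,b<c} u_a′(t) u_b′(t) Γ_{ab}^c(u_1(t), …, u_{c−1}(t)) = 0. In particular every solution of this 'triangular' geodesic-type ODE system extends to all of ℝ. -/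
open FormalMultilinearSeries intervalIntegral MeasureTheory
open scoped ENNReal NNReal

lemma primitive_hasDerivAt {F : ℝ → ℝ} (hF : Continuous F) (t : ℝ) :
    HasDerivAt (fun u => ∫ s in (0:ℝ)..u, F s) (F t) t :=
  intervalIntegral.integral_hasDerivAt_right (hF.intervalIntegrable _ _)
    (hF.stronglyMeasurableAtFilter _ _) hF.continuousAt

lemma deriv_contDiff_omega {f : ℝ → ℝ} (h : ContDiff ℝ (⊤ : ℕ∞) f) : ContDiff ℝ (⊤ : ℕ∞) (deriv f) :=
  ((contDiff_succ_iff_deriv (n := (⊤ : ℕ∞))).mp (by simpa using h)).2.2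

lemma primitive_contDiff {F : ℝ → ℝ} (hF : ContDiff ℝ (⊤ : ℕ∞) F) :
    ContDiff ℝ (⊤ : ℕ∞) (fun u => ∫ s in (0:ℝ)..u, F s) := by
  have hd := primitive_hasDerivAt hF.continuous
  have he : deriv (fun u => ∫ s in (0:ℝ)..u, F s) = F := funext fun x => (hd x).deriv
  refine contDiff_infty_iff_deriv.mpr ⟨fun x => (hd x).differentiableAt, ?_⟩
  rw [he]
  exact hF

noncomputable def sol (n : ℕ) (Γ : (c : Fin n) → Fin c.1 → Fin c.1 → (Fin c.1 → ℝ) → ℝ)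
    (u0 u1 : Fin n → ℝ) : Fin n → ℝ → ℝ
  | c => fun t => u0 c + u1 c * t + ∫ s in (0:ℝ)..t, ∫ r in (0:ℝ)..s,
      -(∑ a : Fin c.1, ∑ b : Fin c.1,
          deriv (sol n Γ u0 u1 (Fin.castLE c.2.le a)) r *
          deriv (sol n Γ u0 u1 (Fin.castLE c.2.le b)) r *
          Γ c a b (fun i => sol n Γ u0 u1 (Fin.castLE c.2.le i) r))
termination_by c => c.1
decreasing_by all_goals simpa using Fin.is_lt _

noncomputable def Fc (n : ℕ) (Γ : (c : Fin n) → Fin c.1 → Fin c.1 → (Fin c.1 → ℝ) → ℝ)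
    (u0 u1 : Fin n → ℝ) (c : Fin n) (r : ℝ) : ℝ :=
  -(∑ a : Fin c.1, ∑ b : Fin c.1,
      deriv (sol n Γ u0 u1 (Fin.castLE c.2.le a)) r *
      deriv (sol n Γ u0 u1 (Fin.castLE c.2.le b)) r *
      Γ c a b (fun i => sol n Γ u0 u1 (Fin.castLE c.2.le i) r))

lemma Fc_def (n : ℕ) (Γ : (c : Fin n) → Fin c.1 → Fin c.1 → (Fin c.1 → ℝ) → ℝ)
    (u0 u1 : Fin n → ℝ) (c : Fin n) (r : ℝ) :
    Fc n Γ u0 u1 c r = -(∑ a : Fin c.1, ∑ b : Fin c.1,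
      deriv (sol n Γ u0 u1 (Fin.castLE c.2.le a)) r *
      deriv (sol n Γ u0 u1 (Fin.castLE c.2.le b)) r *
      Γ c a b (fun i => sol n Γ u0 u1 (Fin.castLE c.2.le i) r)) := rfl

lemma sol_eq (n : ℕ) (Γ : (c : Fin n) → Fin c.1 → Fin c.1 → (Fin c.1 → ℝ) → ℝ)
    (u0 u1 : Fin n → ℝ) (c : Fin n) :
    sol n Γ u0 u1 c = fun t => u0 c + u1 c * t +
      ∫ s in (0:ℝ)..t, ∫ r in (0:ℝ)..s, Fc n Γ u0 u1 c r := by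
  rw [sol]; rfl

section Main

variable (n : ℕ) (Γ : (c : Fin n) → Fin c.1 → Fin c.1 → (Fin c.1 → ℝ) → ℝ)
    (u0 u1 : Fin n → ℝ)

/-- The inductive property of the solution. -/
def P (c : Fin n) : Prop :=
  ContDiff ℝ (⊤ : ℕ∞) (sol n Γ u0 u1 c) ∧ sol n Γ u0 u1 c 0 = u0 c ∧
  deriv (sol n Γ u0 u1 c) = (fun t => u1 c + ∫ r in (0:ℝ)..t, Fc n Γ u0 u1 c r) ∧
  ∀ t, HasDerivAt (deriv (sol n Γ u0 u1 c)) (Fc n Γ u0 u1 c t) t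

variable {n Γ u0 u1}

lemma Fc_contDiff (hΓ : ∀ (c : Fin n) (a b : Fin c.1), ContDiff ℝ (⊤ : ℕ∞) (Γ c a b)) (c : Fin n)
    (IH : ∀ c' : Fin n, c'.1 < c.1 → ContDiff ℝ (⊤ : ℕ∞) (sol n Γ u0 u1 c')) :
    ContDiff ℝ (⊤ : ℕ∞) (Fc n Γ u0 u1 c) := by
  have hsol : ∀ i : Fin c.1, ContDiff ℝ (⊤ : ℕ∞) (sol n Γ u0 u1 (Fin.castLE c.2.le i)) :=
    fun i => IH _ (by simpa using i.2)
  refine ContDiff.neg ?_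
  refine ContDiff.sum fun a _ => ContDiff.sum fun b _ => ?_
  refine ContDiff.mul (ContDiff.mul ?_ ?_) ?_
  · exact deriv_contDiff_omega (hsol a)
  · exact deriv_contDiff_omega (hsol b)
  · exact (hΓ c a b).comp (contDiff_pi.mpr fun i => hsol i)

lemma sol_spec (hΓ : ∀ (c : Fin n) (a b : Fin c.1), ContDiff ℝ (⊤ : ℕ∞) (Γ c a b)) (c : Fin n) :
    P n Γ u0 u1 c := by
  induction' hN : c.1 using Nat.strong_induction_on with N IH generalizing c
  subst hN
  have IH' : ∀ c' : Fin n, c'.1 < c.1 → P n Γ u0 u1 c' := fun c' h => IH c'.1 h c' rfl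
  have hFs : ContDiff ℝ (⊤ : ℕ∞) (Fc n Γ u0 u1 c) := Fc_contDiff hΓ c (fun c' h => (IH' c' h).1)
  set G1 : ℝ → ℝ := fun t => ∫ r in (0:ℝ)..t, Fc n Γ u0 u1 c r with hG1def
  have hG1s : ContDiff ℝ (⊤ : ℕ∞) G1 := primitive_contDiff hFs
  have hG1d : ∀ t, HasDerivAt G1 (Fc n Γ u0 u1 c t) t := primitive_hasDerivAt hFs.continuous
  set G2 : ℝ → ℝ := fun t => ∫ s in (0:ℝ)..t, G1 s with hG2def
  have hG2s : ContDiff ℝ (⊤ : ℕ∞) G2 := primitive_contDiff hG1s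
  have hG2d : ∀ t, HasDerivAt G2 (G1 t) t := primitive_hasDerivAt hG1s.continuous
  have hsol : sol n Γ u0 u1 c = fun t => u0 c + u1 c * t + G2 t := sol_eq n Γ u0 u1 c
  have hder : ∀ t, HasDerivAt (sol n Γ u0 u1 c) (u1 c + G1 t) t := by
    intro t
    rw [hsol]
    have h1 : HasDerivAt (fun t : ℝ => u0 c + u1 c * t) (u1 c) t := by
      simpa using ((hasDerivAt_id t).const_mul (u1 c)).const_add (u0 c)
    exact h1.add (hG2d t)
  have hderiv_eq : deriv (sol n Γ u0 u1 c) = fun t => u1 c + G1 t :=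
    funext fun t => (hder t).deriv
  refine ⟨?_, ?_, hderiv_eq, ?_⟩
  · rw [hsol]
    exact (contDiff_const.add (contDiff_const.mul contDiff_id)).add hG2s
  · rw [hsol]
    simp [hG2def]
  · intro t
    rw [hderiv_eq]
    exact (hG1d t).const_add (u1 c)

lemma sol_deriv_zero (hΓ : ∀ (c : Fin n) (a b : Fin c.1), ContDiff ℝ (⊤ : ℕ∞) (Γ c a b)) (c : Fin n) :
    deriv (sol n Γ u0 u1 c) 0 = u1 c := by
  rw [(sol_spec hΓ c).2.2.1]
  simp

end Main


lemma second_order_unique {f g : ℝ → ℝ} (hf : ContDiff ℝ (⊤ : ℕ∞) f) (hg : ContDiff ℝ (⊤ : ℕ∞) g)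
    (h0 : f 0 = g 0) (h1 : deriv f 0 = deriv g 0)
    (h2 : ∀ t, deriv (deriv f) t = deriv (deriv g) t) : f = g := by
  have hfd : Differentiable ℝ f := hf.differentiable (by simp)
  have hgd : Differentiable ℝ g := hg.differentiable (by simp)
  have hfd' : Differentiable ℝ (deriv f) := (deriv_contDiff_omega hf).differentiable (by simp)
  have hgd' : Differentiable ℝ (deriv g) := (deriv_contDiff_omega hg).differentiable (by simp)
  have k1 : ∀ x : ℝ, deriv f x = deriv g x := by
    intro x
    have hdiff : Differentiable ℝ (fun x => deriv f x - deriv g x) := hfd'.sub hgd'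
    have hz : ∀ y : ℝ, deriv (fun x => deriv f x - deriv g x) y = 0 := by
      intro y
      rw [deriv_fun_sub (hfd'.differentiableAt) (hgd'.differentiableAt), h2, sub_self]
    have hc := is_const_of_deriv_eq_zero hdiff hz x 0
    simp only [h1] at hc
    linarith
  have hdiff : Differentiable ℝ (fun x => f x - g x) := hfd.sub hgd
  have hz : ∀ y : ℝ, deriv (fun x => f x - g x) y = 0 := by
    intro y
    rw [deriv_fun_sub hfd.differentiableAt hgd.differentiableAt, k1, sub_self]
  funext x
  have hc := is_const_of_deriv_eq_zero hdiff hz x 0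
  simp only [h0] at hc
  linarith


/-- Lemma 2.1(1): given, for all indices a, b < c (c indexed by `Fin n`,
a, b ranging over indices below c), smooth functions Γ_{ab}^c depending only on the
first c coordinates u_0, …, u_{c-1}, every initial value problem for the triangular
geodesic-type system
  u_c'' + Σ_{a,b<c} u_a' u_b' Γ_{ab}^c(u_0,…,u_{c-1}) = 0
has a unique smooth solution γ : ℝ → ℝⁿ defined on all of ℝ with γ(0) = u⁰ and
γ'(0) = u¹; in particular all solutions extend for infinite time. -/
theorem triangular_geodesic_system_complete (n : ℕ) (hn : 1 ≤ n)
    (Γ : (c : Fin n) → Fin c.1 → Fin c.1 → (Fin c.1 → ℝ) → ℝ)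
    (hΓ : ∀ (c : Fin n) (a b : Fin c.1), ContDiff ℝ (⊤ : ℕ∞) (Γ c a b))
    (u0 u1 : Fin n → ℝ) :
    ∃! γ : ℝ → (Fin n → ℝ), ContDiff ℝ (⊤ : ℕ∞) γ ∧ γ 0 = u0 ∧ deriv γ 0 = u1 ∧
      ∀ (c : Fin n) (t : ℝ),
        deriv (deriv (fun s => γ s c)) t
          + ∑ a : Fin c.1, ∑ b : Fin c.1,
              deriv (fun s => γ s (Fin.castLE c.2.le a)) t
                * deriv (fun s => γ s (Fin.castLE c.2.le b)) t
                * Γ c a b (fun i => γ t (Fin.castLE c.2.le i)) = 0 := by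
  have hspec : ∀ c : Fin n, P n Γ u0 u1 c := fun c => sol_spec hΓ c
  refine ⟨fun t c => sol n Γ u0 u1 c t, ⟨?_, ?_, ?_, ?_⟩, ?_⟩
  · exact contDiff_pi.mpr fun c => (hspec c).1
  · funext c; exact (hspec c).2.1
  · have hd : HasDerivAt (fun t c => sol n Γ u0 u1 c t) u1 0 := by
      rw [hasDerivAt_pi]
      intro c
      have h := ((hspec c).1.differentiable (by simp) 0).hasDerivAt
      rw [sol_deriv_zero hΓ c] at h
      exact h
    exact hd.deriv
  · intro c t
    have key : deriv (deriv (fun s => sol n Γ u0 u1 c s)) t = Fc n Γ u0 u1 c t :=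
      ((hspec c).2.2.2 t).deriv
    rw [key]
    exact neg_add_cancel _
  · rintro δ ⟨hδs, hδ0, hδ1, hδeq⟩
    have hQ : ∀ c : Fin n, (fun t => δ t c) = sol n Γ u0 u1 c := by
      intro c
      induction' hN : c.1 using Nat.strong_induction_on with N IH generalizing c
      subst hN
      have e : ∀ (i : Fin c.1) (t' : ℝ),
          δ t' (Fin.castLE c.2.le i) = sol n Γ u0 u1 (Fin.castLE c.2.le i) t' :=
        fun i t' => congrFun (IH _ (by simpa using i.2) _ rfl) t'
      have hfs : ContDiff ℝ (⊤ : ℕ∞) (fun t => δ t c) := contDiff_pi.mp hδs c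
      have hf0 : (fun t => δ t c) 0 = u0 c := congrFun hδ0 c
      have hf1 : deriv (fun t => δ t c) 0 = u1 c := by
        have hδd : HasDerivAt δ (deriv δ 0) 0 := (hδs.differentiable (by simp) 0).hasDerivAt
        rw [(hasDerivAt_pi.mp hδd c).deriv, hδ1]
      have hf2 : ∀ t, deriv (deriv (fun s => δ s c)) t = Fc n Γ u0 u1 c t := by
        intro t
        have h := hδeq c t
        simp only [e] at h
        rw [Fc_def]
        linarith
      refine second_order_unique hfs (hspec c).1 ?_ ?_ ?_
      · exact (congrFun hδ0 c).trans (hspec c).2.1.symm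
      · rw [hf1, sol_deriv_zero hΓ c]
      · intro t
        rw [hf2 t, ((hspec c).2.2.2 t).deriv]
    funext t c
    exact congrFun (hQ c) t
end

section
/- Let n ≥ 1 and suppose that for all integers 1 ≤ a, b < c ≤ n one is given smooth functions Γ_{ab}^c : ℝ^{c−1} → ℝ. Then for every pair of points P, Q ∈ ℝⁿ there exists a unique smooth curve γ = (u_1, …, u_n) : ℝ → ℝⁿ satisfying u_c″(t) + Σ_{a,b<c} u_a′(t) u_b′(t) Γ_{ab}^c(u_1(t), …, u_{c−1}(t)) = 0 for all c and all t ∈ ℝ, with γ(0) = P and γ(1) = Q. -/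
open scoped Topology NNReal ENNReal ContDiff

lemma exists_antideriv {g : ℝ → ℝ} (hg : ContDiff ℝ (⊤ : ℕ∞) g) :
    ∃ G : ℝ → ℝ, ContDiff ℝ (⊤ : ℕ∞) G ∧ (∀ t, HasDerivAt G (g t) t) ∧ G 0 = 0 := by
  set G : ℝ → ℝ := fun t => ∫ x in (0:ℝ)..t, g x with hGdef
  have hd : ∀ t, HasDerivAt G (g t) t := fun t =>
    (hg.continuous.integral_hasStrictDerivAt 0 t).hasDerivAt
  refine ⟨G, ?_, hd, by simp [hGdef]⟩
  rw [contDiff_infty_iff_deriv]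
  have hdG : deriv G = g := funext fun t => (hd t).deriv
  exact ⟨fun t => (hd t).differentiableAt, hdG ▸ hg⟩

lemma contDiff_top_deriv {u : ℝ → ℝ} (h : ContDiff ℝ (⊤ : ℕ∞) u) : ContDiff ℝ (⊤ : ℕ∞) (deriv u) := by
  have h' : ContDiff ℝ (⊤ : ℕ∞) u := h
  exact (contDiff_infty_iff_deriv.mp h').2

lemma second_deriv_zero_unique {w : ℝ → ℝ} (hw : Differentiable ℝ w)
    (hw' : Differentiable ℝ (deriv w)) (h2 : ∀ t, deriv (deriv w) t = 0)
    (h0 : w 0 = 0) (h1 : w 1 = 0) : ∀ t, w t = 0 := by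
  have hk : ∀ t, deriv w t = deriv w 0 := fun t => is_const_of_deriv_eq_zero hw' h2 t 0
  set k := deriv w 0 with hkdef
  have hv : ∀ t, w t - k * t = w 0 - k * 0 := by
    intro t
    apply is_const_of_deriv_eq_zero (f := fun t => w t - k * t)
    · exact hw.sub (differentiable_id.const_mul k)
    · intro s
      have hd : HasDerivAt (fun t => w t - k * t) (deriv w s - k) s := by
        exact ((hw s).hasDerivAt).sub (by simpa using (hasDerivAt_id s).const_mul k)
      rw [hd.deriv, hk s]
      ring
  have hk0 : k = 0 := by
    have := hv 1
    rw [h0, h1] at this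
    simpa using this
  intro t
  have := hv t
  rw [h0, hk0] at this
  simpa using this

lemma second_order_bvp {g : ℝ → ℝ} (hg : ContDiff ℝ (⊤ : ℕ∞) g) (p q : ℝ) :
    ∃! u : ℝ → ℝ, ContDiff ℝ (⊤ : ℕ∞) u ∧ (∀ t, deriv (deriv u) t = g t) ∧ u 0 = p ∧ u 1 = q := by
  obtain ⟨G, hGc, hGd, hG0⟩ := exists_antideriv hg
  obtain ⟨H, hHc, hHd, hH0⟩ := exists_antideriv hGc
  set u : ℝ → ℝ := fun t => p + (q - p - H 1) * t + H t with hu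
  have hud : ∀ t, HasDerivAt u ((q - p - H 1) + G t) t := by
    intro t
    have h1 : HasDerivAt (fun t : ℝ => p + (q - p - H 1) * t) (q - p - H 1) t := by
      simpa using ((hasDerivAt_id t).const_mul (q - p - H 1)).const_add p
    exact h1.add (hHd t)
  have hud' : deriv u = fun t => (q - p - H 1) + G t := funext fun t => (hud t).deriv
  have husd : ∀ t, deriv (deriv u) t = g t := by
    intro t
    rw [hud']
    exact (((hGd t).const_add (q - p - H 1))).deriv
  have hucd : ContDiff ℝ (⊤ : ℕ∞) u :=
    (contDiff_const.add (contDiff_const.mul contDiff_id)).add hHc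
  have hu0 : u 0 = p := by simp [hu, hH0]
  have hu1 : u 1 = q := by simp [hu]; ring
  refine ⟨u, ⟨hucd, husd, hu0, hu1⟩, ?_⟩
  rintro v ⟨hvcd, hvsd, hv0, hv1⟩
  have hdv : Differentiable ℝ v := hvcd.differentiable (by simp)
  have hdu : Differentiable ℝ u := hucd.differentiable (by simp)
  have hdv' : Differentiable ℝ (deriv v) := (contDiff_top_deriv hvcd).differentiable (by simp)
  have hdu' : Differentiable ℝ (deriv u) := (contDiff_top_deriv hucd).differentiable (by simp)
  have hsub : deriv (fun t => v t - u t) = fun t => deriv v t - deriv u t :=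
    funext fun t => deriv_sub (hdv t) (hdu t)
  have hzero : ∀ t, v t - u t = 0 := by
    apply second_deriv_zero_unique (w := fun t => v t - u t) (hdv.sub hdu)
    · rw [hsub]; exact hdv'.sub hdu'
    · intro t
      rw [hsub, deriv_fun_sub (hdv' t) (hdu' t), hvsd t, husd t, sub_self]
    · rw [hv0, hu0, sub_self]
    · rw [hv1, hu1, sub_self]
  funext t
  have := hzero t
  linarith

noncomputable def force (n : ℕ) (Γ : (c : Fin n) → Fin c.1 → Fin c.1 → (Fin c.1 → ℝ) → ℝ)
    (c : Fin n) (u : Fin n → ℝ → ℝ) : ℝ → ℝ := fun t =>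
  ∑ a : Fin c.1, ∑ b : Fin c.1,
    deriv (u (Fin.castLE c.2.le a)) t * deriv (u (Fin.castLE c.2.le b)) t
      * Γ c a b (fun i => u (Fin.castLE c.2.le i) t)

lemma force_congr {n : ℕ} {Γ : (c : Fin n) → Fin c.1 → Fin c.1 → (Fin c.1 → ℝ) → ℝ}
    {c : Fin n} {u v : Fin n → ℝ → ℝ} (h : ∀ j : Fin n, j.1 < c.1 → u j = v j) :
    force n Γ c u = force n Γ c v := by
  funext t
  unfold force
  apply Finset.sum_congr rfl
  intro a _
  apply Finset.sum_congr rfl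
  intro b _
  rw [h (Fin.castLE c.2.le a) a.2, h (Fin.castLE c.2.le b) b.2]
  have hfn : (fun i => u (Fin.castLE c.2.le i) t) = (fun i => v (Fin.castLE c.2.le i) t) := by
    funext i
    rw [h (Fin.castLE c.2.le i) i.2]
  rw [hfn]

lemma force_contDiff {n : ℕ} {Γ : (c : Fin n) → Fin c.1 → Fin c.1 → (Fin c.1 → ℝ) → ℝ}
    (hΓ : ∀ (c : Fin n) (a b : Fin c.1), ContDiff ℝ (⊤ : ℕ∞) (Γ c a b))
    {c : Fin n} {u : Fin n → ℝ → ℝ} (hu : ∀ j : Fin n, j.1 < c.1 → ContDiff ℝ (⊤ : ℕ∞) (u j)) :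
    ContDiff ℝ (⊤ : ℕ∞) (force n Γ c u) := by
  unfold force
  apply ContDiff.sum
  intro a _
  apply ContDiff.sum
  intro b _
  refine ContDiff.mul (ContDiff.mul ?_ ?_) ?_
  · exact contDiff_top_deriv (hu _ a.2)
  · exact contDiff_top_deriv (hu _ b.2)
  · exact (hΓ c a b).comp (contDiff_pi.mpr fun i => hu _ i.2)

section Main

variable {n : ℕ} {Γ : (c : Fin n) → Fin c.1 → Fin c.1 → (Fin c.1 → ℝ) → ℝ} {P Q : Fin n → ℝ}

def Sol (Γ : (c : Fin n) → Fin c.1 → Fin c.1 → (Fin c.1 → ℝ) → ℝ) (P Q : Fin n → ℝ)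
    (u : Fin n → ℝ → ℝ) (c : Fin n) : Prop :=
  ContDiff ℝ (⊤ : ℕ∞) (u c) ∧ (∀ t, deriv (deriv (u c)) t = - force n Γ c u t) ∧
    u c 0 = P c ∧ u c 1 = Q c

lemma exists_partial (hΓ : ∀ (c : Fin n) (a b : Fin c.1), ContDiff ℝ (⊤ : ℕ∞) (Γ c a b)) :
    ∀ m : ℕ, ∃ u : Fin n → ℝ → ℝ, ∀ c : Fin n, c.1 < m → Sol Γ P Q u c := by
  intro m
  induction m with
  | zero => exact ⟨fun _ _ => 0, fun c hc => absurd hc (Nat.not_lt_zero _)⟩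
  | succ m ih =>
    obtain ⟨u, hu⟩ := ih
    by_cases hmn : m < n
    · set cm : Fin n := ⟨m, hmn⟩ with hcm
      have hg : ContDiff ℝ (⊤ : ℕ∞) (fun t => - force n Γ cm u t) := by
        exact (force_contDiff hΓ (fun j hj => (hu j hj).1)).neg
      obtain ⟨w, ⟨hwc, hwd, hw0, hw1⟩, -⟩ := second_order_bvp hg (P cm) (Q cm)
      classical
      set u' : Fin n → ℝ → ℝ := Function.update u cm w with hu'
      have hagree : ∀ j : Fin n, j.1 < m → u' j = u j := by
        intro j hj
        apply Function.update_of_ne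
        intro hje
        rw [hje] at hj
        exact absurd hj (lt_irrefl m)
      refine ⟨u', fun c hc => ?_⟩
      rcases Nat.lt_succ_iff_lt_or_eq.mp hc with hlt | heq
      · obtain ⟨h1, h2, h3, h4⟩ := hu c hlt
        have hcc : u' c = u c := hagree c hlt
        have hfc : force n Γ c u' = force n Γ c u :=
          force_congr (fun j hj => hagree j (hj.trans hlt))
        exact ⟨hcc ▸ h1, by rw [hcc, hfc]; exact h2, by rw [hcc]; exact h3,
          by rw [hcc]; exact h4⟩
      · have hceq : c = cm := Fin.ext heq
        have hcc : u' c = w := by rw [hceq]; simp [hu']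
        have hfc : force n Γ c u' = force n Γ c u :=
          force_congr (fun j hj => hagree j (by omega))
        refine ⟨hcc ▸ hwc, ?_, by rw [hcc, hceq]; exact hw0, by rw [hcc, hceq]; exact hw1⟩
        intro t
        rw [hcc, hfc, hceq]
        exact hwd t
    · refine ⟨u, fun c _ => hu c ?_⟩
      omega

lemma unique_partial (hΓ : ∀ (c : Fin n) (a b : Fin c.1), ContDiff ℝ (⊤ : ℕ∞) (Γ c a b))
    {u v : Fin n → ℝ → ℝ} (hu : ∀ c : Fin n, Sol Γ P Q u c)
    (hv : ∀ c : Fin n, Sol Γ P Q v c) : ∀ c : Fin n, u c = v c := by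
  have H : ∀ k : ℕ, ∀ c : Fin n, c.1 = k → u c = v c := by
    intro k
    induction k using Nat.strong_induction_on with
    | _ k ih =>
      intro c hck
      have hfeq : force n Γ c u = force n Γ c v :=
        force_congr (fun j hj => ih j.1 (hck ▸ hj) j rfl)
      have hg : ContDiff ℝ (⊤ : ℕ∞) (fun t => - force n Γ c u t) :=
        (force_contDiff hΓ (fun j _ => (hu j).1)).neg
      obtain ⟨w, -, hwu⟩ := second_order_bvp hg (P c) (Q c)
      obtain ⟨hu1, hu2, hu3, hu4⟩ := hu c
      obtain ⟨hv1, hv2, hv3, hv4⟩ := hv c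
      have h1 : u c = w := hwu (u c) ⟨hu1, hu2, hu3, hu4⟩
      have h2 : v c = w := by
        refine hwu (v c) ⟨hv1, ?_, hv3, hv4⟩
        intro t
        rw [hv2 t, ← hfeq]
      rw [h1, h2]
  exact fun c => H c.1 c rfl

end Main




/-- Lemma 2.1(2): given, for all indices a, b < c (c indexed by `Fin n`,
a, b ranging over indices below c), smooth functions Γ_{ab}^c depending only on the
first c coordinates u_0, …, u_{c-1}, for every pair of points P, Q ∈ ℝⁿ there is a
unique smooth curve γ : ℝ → ℝⁿ solving the triangular geodesic-type system
  u_c'' + Σ_{a,b<c} u_a' u_b' Γ_{ab}^c(u_0,…,u_{c-1}) = 0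
with γ(0) = P and γ(1) = Q. -/
theorem triangular_geodesic_two_point_problem (n : ℕ) (hn : 1 ≤ n)
    (Γ : (c : Fin n) → Fin c.1 → Fin c.1 → (Fin c.1 → ℝ) → ℝ)
    (hΓ : ∀ (c : Fin n) (a b : Fin c.1), ContDiff ℝ (⊤ : ℕ∞) (Γ c a b))
    (P Q : Fin n → ℝ) :
    ∃! γ : ℝ → (Fin n → ℝ), ContDiff ℝ (⊤ : ℕ∞) γ ∧
      (∀ (c : Fin n) (t : ℝ),
        deriv (deriv (fun s => γ s c)) t
          + ∑ a : Fin c.1, ∑ b : Fin c.1,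
              deriv (fun s => γ s (Fin.castLE c.2.le a)) t
                * deriv (fun s => γ s (Fin.castLE c.2.le b)) t
                * Γ c a b (fun i => γ t (Fin.castLE c.2.le i)) = 0) ∧
      γ 0 = P ∧ γ 1 = Q := by
  obtain ⟨u, hu⟩ := exists_partial (Γ := Γ) (P := P) (Q := Q) hΓ n
  have hu' : ∀ c : Fin n, Sol Γ P Q u c := fun c => hu c c.2
  refine ⟨fun t c => u c t, ⟨?_, ?_, ?_, ?_⟩, ?_⟩
  · exact contDiff_pi.mpr fun c => (hu' c).1
  · intro c t
    have heq := (hu' c).2.1 t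
    have : deriv (deriv (fun s => u c s)) t = - force n Γ c u t := heq
    rw [this]
    have : (∑ a : Fin c.1, ∑ b : Fin c.1,
        deriv (fun s => u (Fin.castLE c.2.le a) s) t
          * deriv (fun s => u (Fin.castLE c.2.le b) s) t
          * Γ c a b (fun i => u (Fin.castLE c.2.le i) t)) = force n Γ c u t := rfl
    rw [this]
    ring
  · funext c; exact (hu' c).2.2.1
  · funext c; exact (hu' c).2.2.2
  · rintro γ' ⟨hγc, hγeq, hγ0, hγ1⟩
    set v : Fin n → ℝ → ℝ := fun c t => γ' t c with hv
    have hv' : ∀ c : Fin n, Sol Γ P Q v c := by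
      intro c
      refine ⟨contDiff_pi.mp hγc c, ?_, congrFun hγ0 c, congrFun hγ1 c⟩
      intro t
      have heq := hγeq c t
      have hforce : (∑ a : Fin c.1, ∑ b : Fin c.1,
          deriv (fun s => γ' s (Fin.castLE c.2.le a)) t
            * deriv (fun s => γ' s (Fin.castLE c.2.le b)) t
            * Γ c a b (fun i => γ' t (Fin.castLE c.2.le i))) = force n Γ c v t := rfl
      rw [hforce] at heq
      have : deriv (deriv (fun s => γ' s c)) t = deriv (deriv (v c)) t := rfl
      linarith [this ▸ heq]
    have := unique_partial hΓ hv' hu'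
    funext t c
    exact congrFun (this c) t
end

section
/- For every P ∈ ℝ^m there exists a linear isomorphism φ : ℝ^m → ℝ^m such that g⁰(φu, φv) = g_P(u, v) for all u, v ∈ ℝ^m, and A^k(φξ₁, …, φξ_{4+k}) = ∇^kR_P(ξ₁, …, ξ_{4+k}) for all 0 ≤ k ≤ p and all ξ_1, …, ξ_{4+k} ∈ ℝ^m. (That is, 𝒰^p_{2p+6} = (ℝ^m, g⁰, A^0, …, A^p) is a p-model for M_{2p+6,f}, so M_{2p+6,f} is p-curvature homogeneous.) -/
/- Setting of Gilkey–Nikčević: m = 2p+6, coordinates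
   (x, y, z_0, …, z_p, x̄, ȳ, z̄_0, …, z̄_p) on ℝ^m. -/

/-- The model space ℝ^{2p+6}. -/
abbrev Vp (p : ℕ) := Fin (2*p+6) → ℝ

/-- index of the coordinate x -/
def ix (p : ℕ) : Fin (2*p+6) := ⟨0, by omega⟩
/-- index of the coordinate y -/
def iy (p : ℕ) : Fin (2*p+6) := ⟨1, by omega⟩
/-- index of the coordinate z_i -/
def iz (p : ℕ) (i : Fin (p+1)) : Fin (2*p+6) := ⟨2 + i.1, by have := i.2; omega⟩
/-- index of the coordinate x̄ -/
def ixb (p : ℕ) : Fin (2*p+6) := ⟨p+3, by omega⟩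
/-- index of the coordinate ȳ -/
def iyb (p : ℕ) : Fin (2*p+6) := ⟨p+4, by omega⟩
/-- index of the coordinate z̄_i -/
def izb (p : ℕ) (i : Fin (p+1)) : Fin (2*p+6) := ⟨p+5+i.1, by have := i.2; omega⟩

/-- F(y, z⃗) = f(y) + Σ_{i=0}^p y^{i+1} z_i, evaluated at the coordinates of the point P. -/
noncomputable def FF (p : ℕ) (f : ℝ → ℝ) (P : Vp p) : ℝ :=
  f (P (iy p)) + ∑ i : Fin (p+1), (P (iy p))^(i.1+1) * P (iz p i)

/-- The symmetric bilinear form g_P on ℝ^{2p+6}: the only nonzero components on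
basis vectors are g(∂x,∂x̄)=g(∂y,∂ȳ)=g(∂z_i,∂z̄_i)=1 and g(∂x,∂x) = -2F(y,z⃗). -/
noncomputable def gP (p : ℕ) (f : ℝ → ℝ) (P : Vp p) (u v : Vp p) : ℝ :=
  u (ix p) * v (ixb p) + u (ixb p) * v (ix p)
  + u (iy p) * v (iyb p) + u (iyb p) * v (iy p)
  + ∑ i : Fin (p+1), (u (iz p i) * v (izb p i) + u (izb p i) * v (iz p i))
  - 2 * FF p f P * (u (ix p) * v (ix p))

/-- wedge component: (u ∧ v)_{ab} = u_a v_b - u_b v_a. -/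
def wdg (p : ℕ) (a b : Fin (2*p+6)) (u v : Vp p) : ℝ := u a * v b - u b * v a

/-- The (4+k)-linear form ∇^kR_P on ℝ^{2p+6}: it is antisymmetric in arguments 1,2 and
in arguments 3,4, symmetric under interchanging the pair (1,2) with the pair (3,4),
and its only nonzero components on basis vectors up to these symmetries are
∇^kR_P(∂x,∂y,∂y,∂x;∂y,…,∂y) = f^{(k+2)}(y) + Σ_i (d/dy)^{k+2}(y^{i+1})·z_i,
∇^kR_P(∂x,∂y,∂z_i,∂x;∂y,…,∂y) = (d/dy)^{k+1}(y^{i+1}), and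
∇^kR_P(∂x,∂y,∂y,∂x;∂y,…,∂z_i,…,∂y) = (d/dy)^{k+1}(y^{i+1}) (∂z_i in one derivative slot).
This `def` is the unique multilinear map with these components, written out explicitly. -/
noncomputable def nR (p : ℕ) (f : ℝ → ℝ) (k : ℕ) (P : Vp p)
    (ξ₁ ξ₂ ξ₃ ξ₄ : Vp p) (η : Fin k → Vp p) : ℝ :=
  -(wdg p (ix p) (iy p) ξ₁ ξ₂ * wdg p (ix p) (iy p) ξ₃ ξ₄) *
    ((iteratedDeriv (k+2) f (P (iy p))
        + ∑ i : Fin (p+1), iteratedDeriv (k+2) (fun t => t^(i.1+1)) (P (iy p)) * P (iz p i))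
        * ∏ j : Fin k, η j (iy p)
      + ∑ i : Fin (p+1), iteratedDeriv (k+1) (fun t => t^(i.1+1)) (P (iy p)) *
          ∑ j : Fin k, η j (iz p i) * ∏ l ∈ Finset.univ.erase j, η l (iy p))
  - (∑ i : Fin (p+1), iteratedDeriv (k+1) (fun t => t^(i.1+1)) (P (iy p)) *
      (wdg p (ix p) (iy p) ξ₁ ξ₂ * wdg p (ix p) (iz p i) ξ₃ ξ₄
        + wdg p (ix p) (iz p i) ξ₁ ξ₂ * wdg p (ix p) (iy p) ξ₃ ξ₄)) * ∏ j : Fin k, η j (iy p)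

/-- The model inner product g⁰ on ℝ^{2p+6}: nonzero components
g⁰(X,X̄)=g⁰(Y,Ȳ)=g⁰(Z_i,Z̄_i)=1 (with respect to the chosen basis). -/
def g0 (p : ℕ) (u v : Vp p) : ℝ :=
  u (ix p) * v (ixb p) + u (ixb p) * v (ix p)
  + u (iy p) * v (iyb p) + u (iyb p) * v (iy p)
  + ∑ i : Fin (p+1), (u (iz p i) * v (izb p i) + u (izb p i) * v (iz p i))

/-- The model tensor A^k on ℝ^{2p+6}, with the same symmetries as ∇^kR and whose only
nonzero components, up to symmetry, are A^0(X,Y,Z_0,X)=1; for 1 ≤ k ≤ p: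
A^k(X,Y,Z_k,X;Y,…,Y)=1 and A^k(X,Y,Y,X;Y,…,Z_k,…,Y)=1 (Z_k in one derivative slot);
and A^{p+1}(X,Y,Y,X;Y,…,Y) = A^{p+2}(X,Y,Y,X;Y,…,Y) = 1. -/
def AT (p : ℕ) (k : ℕ) (ξ₁ ξ₂ ξ₃ ξ₄ : Vp p) (η : Fin k → Vp p) : ℝ :=
  -(wdg p (ix p) (iy p) ξ₁ ξ₂ * wdg p (ix p) (iy p) ξ₃ ξ₄) *
    ((if p+1 ≤ k then (1:ℝ) else 0) * ∏ j : Fin k, η j (iy p)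
      + ∑ i : Fin (p+1), (if i.1 = k then (1:ℝ) else 0) *
          ∑ j : Fin k, η j (iz p i) * ∏ l ∈ Finset.univ.erase j, η l (iy p))
  - (∑ i : Fin (p+1), (if i.1 = k then (1:ℝ) else 0) *
      (wdg p (ix p) (iy p) ξ₁ ξ₂ * wdg p (ix p) (iz p i) ξ₃ ξ₄
        + wdg p (ix p) (iz p i) ξ₁ ξ₂ * wdg p (ix p) (iy p) ξ₃ ξ₄)) * ∏ j : Fin k, η j (iy p)


/-! ### Auxiliary development -/

open Finset Matrix

lemma iteratedDeriv_pow' (n : ℕ) : ∀ (m : ℕ) (x : ℝ),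
    iteratedDeriv n (fun t : ℝ => t ^ m) x = (m.descFactorial n : ℝ) * x ^ (m - n) := by
  induction n with
  | zero => intro m x; simp
  | succ n ih =>
    intro m x
    rw [iteratedDeriv_succ']
    have hd : deriv (fun t : ℝ => t ^ m) = fun t : ℝ => (m:ℝ) * t ^ (m-1) :=
      funext fun t => deriv_pow_field m
    have hcm : iteratedDeriv n (fun t : ℝ => (m:ℝ) * t ^ (m-1)) x
        = (m:ℝ) * iteratedDeriv n (fun t : ℝ => t ^ (m-1)) x := by
      rw [← iteratedDerivWithin_univ, ← iteratedDerivWithin_univ,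
        iteratedDerivWithin_const_mul (Set.mem_univ x) uniqueDiffOn_univ (m:ℝ)
          (by fun_prop : ContDiff ℝ n fun t : ℝ => t ^ (m-1)).contDiffWithinAt]
    rw [hd, hcm, ih]
    rw [show m - 1 - n = m - (n+1) from by omega]
    have hdf : ((m.descFactorial (n+1) : ℝ)) = m * ((m-1).descFactorial n) := by
      cases m with
      | zero => simp
      | succ m => push_cast [Nat.succ_descFactorial_succ]; simp
    rw [hdf]; ring

section Aux

variable (p : ℕ) (f : ℝ → ℝ) (P : Vp p)

/-- transformation matrix for the z-block -/
noncomputable def Mmat : Matrix (Fin (p+1)) (Fin (p+1)) ℝ :=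
  fun k i => iteratedDeriv (k.1+1) (fun t : ℝ => t ^ (i.1+1)) (P (iy p))

/-- the coefficient a_k -/
noncomputable def aco (k : ℕ) : ℝ :=
  iteratedDeriv (k+2) f (P (iy p))
    + ∑ i : Fin (p+1), iteratedDeriv (k+2) (fun t : ℝ => t ^ (i.1+1)) (P (iy p)) * P (iz p i)

/-- shear coefficients -/
noncomputable def tvec (k : Fin (p+1)) : ℝ := aco p f P k.1 / (k.1+2)

lemma tvec_spec (k : Fin (p+1)) : ((k.1:ℝ) + 2) * tvec p f P k = aco p f P k.1 := by
  rw [tvec, mul_div_cancel₀]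
  positivity

/-- inverse transpose matrix for the z̄-block -/
noncomputable def Nmat : Matrix (Fin (p+1)) (Fin (p+1)) ℝ := ((Mmat p P)ᵀ)⁻¹

lemma Mmat_apply (k i : Fin (p+1)) :
    Mmat p P k i = ((i.1+1).descFactorial (k.1+1) : ℝ) * (P (iy p)) ^ (i.1 - k.1) := by
  rw [Mmat, iteratedDeriv_pow', Nat.succ_sub_succ]

lemma Mmat_det : IsUnit (Mmat p P).det := by
  rw [Matrix.det_of_upperTriangular (M := Mmat p P) ?ht]
  · apply isUnit_iff_ne_zero.2
    apply Finset.prod_ne_zero_iff.2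
    intro i _
    rw [Mmat_apply]
    simp only [Nat.sub_self, pow_zero, mul_one]
    exact Nat.cast_ne_zero.2 (by simp [Nat.descFactorial_eq_zero_iff_lt])
  · intro i j hji
    have hji' : j.1 < i.1 := hji
    rw [Mmat_apply, Nat.descFactorial_eq_zero_iff_lt.2 (by omega)]
    simp

lemma MtN : (Mmat p P)ᵀ * Nmat p P = 1 :=
  Matrix.mul_nonsing_inv _ (by rw [Matrix.det_transpose]; exact Mmat_det p P)

lemma NMt : Nmat p P * (Mmat p P)ᵀ = 1 :=
  Matrix.nonsing_inv_mul _ (by rw [Matrix.det_transpose]; exact Mmat_det p P)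

lemma key_sum (x w : Fin (p+1) → ℝ) :
    ∑ i : Fin (p+1), (∑ j : Fin (p+1), Mmat p P i j * x j) * (∑ j : Fin (p+1), Nmat p P i j * w j)
      = ∑ j : Fin (p+1), x j * w j := by
  have h1 : ∀ i, (∑ j : Fin (p+1), Mmat p P i j * x j) = (Mmat p P).mulVec x i := by
    intro i; simp [Matrix.mulVec, dotProduct]
  have h2 : ∀ i, (∑ j : Fin (p+1), Nmat p P i j * w j) = (Nmat p P).mulVec w i := by
    intro i; simp [Matrix.mulVec, dotProduct]
  calc ∑ i : Fin (p+1), (∑ j, Mmat p P i j * x j) * (∑ j, Nmat p P i j * w j)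
      = ((Mmat p P).mulVec x) ⬝ᵥ ((Nmat p P).mulVec w) := by
        simp only [dotProduct, h1, h2]
    _ = x ⬝ᵥ w := by
        rw [← Matrix.vecMul_transpose, dotProduct_mulVec, Matrix.vecMul_vecMul,
          MtN, Matrix.vecMul_one]

end Aux

section Phi

variable (p : ℕ) (f : ℝ → ℝ) (P : Vp p)

/-- the normalizing linear map -/
noncomputable def phiFun (u : Vp p) : Vp p := fun a =>
  if a.1 = 0 then u (ix p)
  else if a.1 = 1 then u (iy p)
  else if h2 : a.1 < p + 3 then
    (∑ j : Fin (p+1), Mmat p P ⟨a.1 - 2, by omega⟩ j * u (iz p j))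
      + tvec p f P ⟨a.1 - 2, by omega⟩ * u (iy p)
  else if a.1 = p + 3 then u (ixb p) - FF p f P * u (ix p)
  else if a.1 = p + 4 then
    u (iyb p) - ∑ i : Fin (p+1), tvec p f P i * ∑ j : Fin (p+1), Nmat p P i j * u (izb p j)
  else ∑ j : Fin (p+1), Nmat p P ⟨a.1 - (p+5), by have := a.2; omega⟩ j * u (izb p j)

lemma phiFun_ix (u : Vp p) : phiFun p f P u (ix p) = u (ix p) := by
  simp [phiFun, ix]

lemma phiFun_iy (u : Vp p) : phiFun p f P u (iy p) = u (iy p) := by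
  simp [phiFun, iy]

lemma phiFun_iz (u : Vp p) (i : Fin (p+1)) :
    phiFun p f P u (iz p i)
      = (∑ j : Fin (p+1), Mmat p P i j * u (iz p j)) + tvec p f P i * u (iy p) := by
  have hi := i.2
  simp only [phiFun]
  rw [if_neg (by simp only [iz]; omega), if_neg (by simp only [iz]; omega),
    dif_pos (by simp only [iz]; omega)]
  simp [iz, Nat.add_sub_cancel_left]

lemma phiFun_ixb (u : Vp p) :
    phiFun p f P u (ixb p) = u (ixb p) - FF p f P * u (ix p) := by
  simp only [phiFun, ixb]
  rw [if_neg (by omega), if_neg (by omega), dif_neg (by omega)]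
  simp

lemma phiFun_iyb (u : Vp p) :
    phiFun p f P u (iyb p)
      = u (iyb p) - ∑ i : Fin (p+1), tvec p f P i * ∑ j : Fin (p+1), Nmat p P i j * u (izb p j) := by
  simp only [phiFun, iyb]
  rw [if_neg (by omega), if_neg (by omega), dif_neg (by omega), if_neg (by omega)]
  simp

lemma phiFun_izb (u : Vp p) (i : Fin (p+1)) :
    phiFun p f P u (izb p i) = ∑ j : Fin (p+1), Nmat p P i j * u (izb p j) := by
  have hi := i.2
  simp only [phiFun]
  rw [if_neg (by simp only [izb]; omega), if_neg (by simp only [izb]; omega),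
    dif_neg (by simp only [izb]; omega), if_neg (by simp only [izb]; omega),
    if_neg (by simp only [izb]; omega)]
  simp [izb, Nat.add_sub_cancel_left]

/-- the normalizing linear map, as a linear map -/
noncomputable def phiL : Vp p →ₗ[ℝ] Vp p where
  toFun := phiFun p f P
  map_add' u v := by
    funext a
    simp only [phiFun, Pi.add_apply]
    split_ifs <;>
      simp [Finset.sum_add_distrib, mul_add, Finset.mul_sum] <;> ring
  map_smul' c u := by
    funext a
    simp only [phiFun, Pi.smul_apply, smul_eq_mul, RingHom.id_apply]
    split_ifs <;>
      simp [Finset.mul_sum, mul_sub, mul_add] <;> ring_nf <;>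
        simp [Finset.mul_sum, mul_left_comm, mul_comm]

lemma phiL_ker (u : Vp p) (h : phiFun p f P u = 0) : u = 0 := by
  have hx : u (ix p) = 0 := by
    have := congrFun h (ix p); rwa [phiFun_ix] at this
  have hy : u (iy p) = 0 := by
    have := congrFun h (iy p); rwa [phiFun_iy] at this
  have hz : ∀ i, u (iz p i) = 0 := by
    have hM : (Mmat p P).mulVec (fun j => u (iz p j)) = 0 := by
      funext i
      have := congrFun h (iz p i)
      rw [phiFun_iz, hy, mul_zero, add_zero] at this
      simpa [Matrix.mulVec, dotProduct] using this
    have : (fun j => u (iz p j)) = 0 := by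
      have h1 := congrArg (fun w => ((Mmat p P)⁻¹).mulVec w) hM
      simpa [Matrix.mulVec_mulVec, Matrix.nonsing_inv_mul _ (Mmat_det p P)] using h1
    exact fun i => congrFun this i
  have hzb : ∀ i, u (izb p i) = 0 := by
    have hN : (Nmat p P).mulVec (fun j => u (izb p j)) = 0 := by
      funext i
      have := congrFun h (izb p i)
      rw [phiFun_izb] at this
      simpa [Matrix.mulVec, dotProduct] using this
    have : (fun j => u (izb p j)) = 0 := by
      have h1 := congrArg (fun w => ((Mmat p P)ᵀ).mulVec w) hN
      simpa [Matrix.mulVec_mulVec, MtN p P] using h1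
    exact fun i => congrFun this i
  have hyb : u (iyb p) = 0 := by
    have := congrFun h (iyb p)
    rw [phiFun_iyb] at this
    simpa [hzb] using this
  have hxb : u (ixb p) = 0 := by
    have := congrFun h (ixb p)
    rw [phiFun_ixb, hx, mul_zero, sub_zero] at this
    exact this
  funext a
  have ha := a.2
  show u a = 0
  by_cases h0 : a.1 = 0
  · rw [show a = ix p from Fin.ext (by simp [ix, h0])]; exact hx
  by_cases h1 : a.1 = 1
  · rw [show a = iy p from Fin.ext (by simp [iy, h1])]; exact hy
  by_cases h2 : a.1 < p + 3
  · rw [show a = iz p ⟨a.1 - 2, by omega⟩ from Fin.ext (by simp [iz]; omega)]; exact hz _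
  by_cases h3 : a.1 = p + 3
  · rw [show a = ixb p from Fin.ext (by simp [ixb, h3])]; exact hxb
  by_cases h4 : a.1 = p + 4
  · rw [show a = iyb p from Fin.ext (by simp [iyb, h4])]; exact hyb
  · rw [show a = izb p ⟨a.1 - (p+5), by omega⟩ from Fin.ext (by simp [izb]; omega)]; exact hzb _

end Phi

section Equiv

variable (p : ℕ) (f : ℝ → ℝ) (P : Vp p)

lemma phiL_inj : Function.Injective (phiL p f P) := by
  rw [← LinearMap.ker_eq_bot]
  exact LinearMap.ker_eq_bot'.2 fun u hu => phiL_ker p f P u hu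

/-- the normalizing linear equivalence -/
noncomputable def phiE : Vp p ≃ₗ[ℝ] Vp p :=
  LinearEquiv.ofBijective (phiL p f P)
    ⟨phiL_inj p f P, (LinearMap.injective_iff_surjective).1 (phiL_inj p f P)⟩

lemma phiE_apply (u : Vp p) : phiE p f P u = phiFun p f P u := rfl

lemma metric_eq (u v : Vp p) : g0 p (phiE p f P u) (phiE p f P v) = gP p f P u v := by
  simp only [phiE_apply, g0, gP, phiFun_ix, phiFun_iy, phiFun_ixb, phiFun_iyb,
    phiFun_iz, phiFun_izb]
  have e1 : ∀ i : Fin (p+1),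
      ((∑ j : Fin (p+1), Mmat p P i j * u (iz p j)) + tvec p f P i * u (iy p))
          * (∑ j : Fin (p+1), Nmat p P i j * v (izb p j))
        + (∑ j : Fin (p+1), Nmat p P i j * u (izb p j))
          * ((∑ j : Fin (p+1), Mmat p P i j * v (iz p j)) + tvec p f P i * v (iy p))
      = ((∑ j : Fin (p+1), Mmat p P i j * u (iz p j))
            * (∑ j : Fin (p+1), Nmat p P i j * v (izb p j))
          + (∑ j : Fin (p+1), Mmat p P i j * v (iz p j))
            * (∑ j : Fin (p+1), Nmat p P i j * u (izb p j)))
        + (u (iy p) * (tvec p f P i * ∑ j : Fin (p+1), Nmat p P i j * v (izb p j))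
          + (tvec p f P i * ∑ j : Fin (p+1), Nmat p P i j * u (izb p j)) * v (iy p)) := by
    intro i; ring
  rw [Finset.sum_congr rfl fun i _ => e1 i, Finset.sum_add_distrib, Finset.sum_add_distrib,
    Finset.sum_add_distrib]
  have k1 := key_sum p P (fun j => u (iz p j)) (fun j => v (izb p j))
  have k2 := key_sum p P (fun j => v (iz p j)) (fun j => u (izb p j))
  rw [k1, k2, ← Finset.mul_sum, ← Finset.sum_mul]
  have e2 : ∑ i : Fin (p+1), (u (iz p i) * v (izb p i) + u (izb p i) * v (iz p i))
      = (∑ j : Fin (p+1), u (iz p j) * v (izb p j))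
        + ∑ j : Fin (p+1), v (iz p j) * u (izb p j) := by
    rw [Finset.sum_add_distrib]
    congr 1
    exact Finset.sum_congr rfl fun j _ => mul_comm _ _
  rw [e2]
  ring

end Equiv

section Tensor

variable (p : ℕ) (f : ℝ → ℝ) (P : Vp p)

lemma wdg_xy_phi (ξ₁ ξ₂ : Vp p) :
    wdg p (ix p) (iy p) (phiFun p f P ξ₁) (phiFun p f P ξ₂) = wdg p (ix p) (iy p) ξ₁ ξ₂ := by
  simp [wdg, phiFun_ix, phiFun_iy]

lemma wdg_xz_phi (ξ₁ ξ₂ : Vp p) (i : Fin (p+1)) :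
    wdg p (ix p) (iz p i) (phiFun p f P ξ₁) (phiFun p f P ξ₂)
      = (∑ j : Fin (p+1), Mmat p P i j * wdg p (ix p) (iz p j) ξ₁ ξ₂)
        + tvec p f P i * wdg p (ix p) (iy p) ξ₁ ξ₂ := by
  simp only [wdg, phiFun_ix, phiFun_iy, phiFun_iz]
  rw [show (∑ j : Fin (p+1), Mmat p P i j * (ξ₁ (ix p) * ξ₂ (iz p j) - ξ₁ (iz p j) * ξ₂ (ix p)))
      = ξ₁ (ix p) * (∑ j : Fin (p+1), Mmat p P i j * ξ₂ (iz p j))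
        - (∑ j : Fin (p+1), Mmat p P i j * ξ₁ (iz p j)) * ξ₂ (ix p) from ?_]
  · ring
  · rw [Finset.mul_sum, Finset.sum_mul, ← Finset.sum_sub_distrib]
    exact Finset.sum_congr rfl fun j _ => by ring

lemma AT_eq (k : ℕ) (hk : k ≤ p) (ξ₁ ξ₂ ξ₃ ξ₄ : Vp p) (η : Fin k → Vp p) :
    AT p k ξ₁ ξ₂ ξ₃ ξ₄ η =
      -(wdg p (ix p) (iy p) ξ₁ ξ₂ * wdg p (ix p) (iy p) ξ₃ ξ₄) *
        (∑ j : Fin k, η j (iz p ⟨k, by omega⟩) * ∏ l ∈ Finset.univ.erase j, η l (iy p))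
      - (wdg p (ix p) (iy p) ξ₁ ξ₂ * wdg p (ix p) (iz p ⟨k, by omega⟩) ξ₃ ξ₄
          + wdg p (ix p) (iz p ⟨k, by omega⟩) ξ₁ ξ₂ * wdg p (ix p) (iy p) ξ₃ ξ₄)
        * ∏ j : Fin k, η j (iy p) := by
  have hsel : ∀ (X : Fin (p+1) → ℝ),
      (∑ i : Fin (p+1), (if i.1 = k then (1:ℝ) else 0) * X i) = X ⟨k, by omega⟩ := by
    intro X
    rw [Finset.sum_eq_single (⟨k, by omega⟩ : Fin (p+1))]
    · simp
    · intro i _ hne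
      rw [if_neg (fun h => hne (Fin.ext h)), zero_mul]
    · simp
  rw [AT, if_neg (by omega), hsel, hsel]
  ring

lemma nR_eq (k : ℕ) (hk : k ≤ p) (ξ₁ ξ₂ ξ₃ ξ₄ : Vp p) (η : Fin k → Vp p) :
    nR p f k P ξ₁ ξ₂ ξ₃ ξ₄ η =
      -(wdg p (ix p) (iy p) ξ₁ ξ₂ * wdg p (ix p) (iy p) ξ₃ ξ₄) *
        (aco p f P k * ∏ j : Fin k, η j (iy p)
          + ∑ i : Fin (p+1), Mmat p P ⟨k, by omega⟩ i *
              ∑ j : Fin k, η j (iz p i) * ∏ l ∈ Finset.univ.erase j, η l (iy p))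
      - (∑ i : Fin (p+1), Mmat p P ⟨k, by omega⟩ i *
          (wdg p (ix p) (iy p) ξ₁ ξ₂ * wdg p (ix p) (iz p i) ξ₃ ξ₄
            + wdg p (ix p) (iz p i) ξ₁ ξ₂ * wdg p (ix p) (iy p) ξ₃ ξ₄))
          * ∏ j : Fin k, η j (iy p) := by
  simp only [nR, aco, Mmat]

lemma sum_erase_self (k : ℕ) (η : Fin k → Vp p) :
    ∑ j : Fin k, η j (iy p) * ∏ l ∈ Finset.univ.erase j, η l (iy p)
      = (k : ℝ) * ∏ j : Fin k, η j (iy p) := by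
  calc ∑ j : Fin k, η j (iy p) * ∏ l ∈ Finset.univ.erase j, η l (iy p)
      = ∑ _j : Fin k, ∏ l : Fin k, η l (iy p) :=
        Finset.sum_congr rfl fun j _ =>
          Finset.mul_prod_erase Finset.univ (fun l => η l (iy p)) (Finset.mem_univ j)
    _ = (k : ℝ) * ∏ j : Fin k, η j (iy p) := by
        rw [Finset.sum_const, Finset.card_univ, Fintype.card_fin, nsmul_eq_mul]

lemma sum_swap_S (k : ℕ) (hk : k ≤ p) (η : Fin k → Vp p) :
    ∑ j : Fin k, (∑ i : Fin (p+1), Mmat p P ⟨k, by omega⟩ i * η j (iz p i))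
        * ∏ l ∈ Finset.univ.erase j, η l (iy p)
      = ∑ i : Fin (p+1), Mmat p P ⟨k, by omega⟩ i *
          ∑ j : Fin k, η j (iz p i) * ∏ l ∈ Finset.univ.erase j, η l (iy p) := by
  rw [Finset.sum_congr rfl fun j _ => Finset.sum_mul _ _ _, Finset.sum_comm]
  exact Finset.sum_congr rfl fun i _ => by
    rw [Finset.mul_sum]
    exact Finset.sum_congr rfl fun j _ => by ring

lemma tensor_eq (k : ℕ) (hk : k ≤ p) (ξ₁ ξ₂ ξ₃ ξ₄ : Vp p) (η : Fin k → Vp p) :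
    AT p k (phiFun p f P ξ₁) (phiFun p f P ξ₂) (phiFun p f P ξ₃) (phiFun p f P ξ₄)
        (fun j => phiFun p f P (η j))
      = nR p f k P ξ₁ ξ₂ ξ₃ ξ₄ η := by
  rw [AT_eq p k hk, nR_eq p f P k hk]
  simp only [wdg_xy_phi, wdg_xz_phi, phiFun_iy, phiFun_iz]
  have hexp : ∀ j : Fin k,
      ((∑ i : Fin (p+1), Mmat p P ⟨k, by omega⟩ i * η j (iz p i))
          + tvec p f P ⟨k, by omega⟩ * η j (iy p))
        * ∏ l ∈ Finset.univ.erase j, η l (iy p)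
      = (∑ i : Fin (p+1), Mmat p P ⟨k, by omega⟩ i * η j (iz p i))
          * ∏ l ∈ Finset.univ.erase j, η l (iy p)
        + tvec p f P ⟨k, by omega⟩
          * (η j (iy p) * ∏ l ∈ Finset.univ.erase j, η l (iy p)) := fun j => by ring
  rw [Finset.sum_congr rfl fun j _ => hexp j, Finset.sum_add_distrib,
    sum_swap_S p P k hk, ← Finset.mul_sum, sum_erase_self]
  have hsplit : ∑ i : Fin (p+1), Mmat p P ⟨k, by omega⟩ i *
        (wdg p (ix p) (iy p) ξ₁ ξ₂ * wdg p (ix p) (iz p i) ξ₃ ξ₄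
          + wdg p (ix p) (iz p i) ξ₁ ξ₂ * wdg p (ix p) (iy p) ξ₃ ξ₄)
      = wdg p (ix p) (iy p) ξ₁ ξ₂ *
          (∑ i : Fin (p+1), Mmat p P ⟨k, by omega⟩ i * wdg p (ix p) (iz p i) ξ₃ ξ₄)
        + (∑ i : Fin (p+1), Mmat p P ⟨k, by omega⟩ i * wdg p (ix p) (iz p i) ξ₁ ξ₂)
          * wdg p (ix p) (iy p) ξ₃ ξ₄ := by
    rw [Finset.mul_sum, Finset.sum_mul, ← Finset.sum_add_distrib]
    exact Finset.sum_congr rfl fun i _ => by ring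
  rw [hsplit]
  have ts : ((k:ℝ) + 2) * tvec p f P ⟨k, by omega⟩ = aco p f P k := by
    simpa using tvec_spec p f P ⟨k, by omega⟩
  linear_combination (-(wdg p (ix p) (iy p) ξ₁ ξ₂ * wdg p (ix p) (iy p) ξ₃ ξ₄
      * ∏ j : Fin k, η j (iy p))) * ts

end Tensor

/-- 𝒰^p_{2p+6} = (ℝ^m, g⁰, A^0, …, A^p) is a p-model for M_{2p+6,f}:
for every point P there is a linear isomorphism φ of ℝ^m carrying g_P to g⁰ and
∇^kR_P to A^k for all 0 ≤ k ≤ p. -/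
theorem curvature_homogeneous_p_model (p : ℕ) (f : ℝ → ℝ) (hf : ContDiff ℝ (⊤ : ℕ∞) f)
    (P : Vp p) :
    ∃ φ : Vp p ≃ₗ[ℝ] Vp p,
      (∀ u v : Vp p, g0 p (φ u) (φ v) = gP p f P u v) ∧
      (∀ k : ℕ, k ≤ p → ∀ (ξ₁ ξ₂ ξ₃ ξ₄ : Vp p) (η : Fin k → Vp p),
        AT p k (φ ξ₁) (φ ξ₂) (φ ξ₃) (φ ξ₄) (fun j => φ (η j))
          = nR p f k P ξ₁ ξ₂ ξ₃ ξ₄ η) := by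
  exact ⟨phiE p f P, fun u v => metric_eq p f P u v,
    fun k hk ξ₁ ξ₂ ξ₃ ξ₄ η => tensor_eq p f P k hk ξ₁ ξ₂ ξ₃ ξ₄ η⟩
end

section
/- Assume f^{(p+3)}(y) > 0 and f^{(p+4)}(y) > 0 for all y ∈ ℝ. Then for every P ∈ ℝ^m there exists a linear isomorphism φ : ℝ^m → ℝ^m such that g⁰(φu, φv) = g_P(u, v) for all u, v ∈ ℝ^m, and A^k(φξ₁, …, φξ_{4+k}) = ∇^kR_P(ξ₁, …, ξ_{4+k}) for all 0 ≤ k ≤ p+2 and all ξ_1, …, ξ_{4+k} ∈ ℝ^m. (That is, 𝒰^{p+2}_{2p+6} = (ℝ^m, g⁰, A^0, …, A^{p+2}) is a (p+2)-model for M_{2p+6,f}, so M_{2p+6,f} is (p+2)-curvature homogeneous.) -/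
set_option linter.unusedSectionVars false
set_option linter.unusedVariables false
set_option maxHeartbeats 1000000


namespace GN

/- ## monomial derivatives -/
lemma iterDeriv_pow (m n : ℕ) :
    iteratedDeriv n (fun t : ℝ => t ^ m) = fun t => (m.descFactorial n : ℝ) * t ^ (m - n) := by
  induction n with
  | zero => funext t; simp
  | succ n ih =>
    funext t
    rw [iteratedDeriv_succ, ih]
    have h : deriv (fun t : ℝ => (m.descFactorial n : ℝ) * t ^ (m - n)) t
        = (m.descFactorial n : ℝ) * (((m - n : ℕ) : ℝ) * t ^ (m - n - 1)) := by
      rw [deriv_const_mul _ (differentiableAt_pow _), deriv_pow_field]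
    rw [h, Nat.descFactorial_succ]
    have : m - (n+1) = m - n - 1 := by omega
    rw [this]
    push_cast
    ring

lemma pi_zero (j n : ℕ) (h : j + 1 < n) (x : ℝ) :
    iteratedDeriv n (fun t : ℝ => t^(j+1)) x = 0 := by
  rw [iterDeriv_pow]
  simp [Nat.descFactorial_eq_zero_iff_lt.2 h]

lemma pi_diag (j : ℕ) (x : ℝ) :
    iteratedDeriv (j+1) (fun t : ℝ => t^(j+1)) x = (Nat.factorial (j+1) : ℝ) := by
  rw [iterDeriv_pow]
  simp only [Nat.sub_self, pow_zero, mul_one, Nat.descFactorial_self]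

/- ## finite sum/product helpers -/
lemma prod_mul_const {k : ℕ} (w : ℝ) (g : Fin k → ℝ) :
    (∏ j, (w * g j)) = w^k * ∏ j, g j := by
  rw [Finset.prod_mul_distrib, Finset.prod_const]
  congr 2
  simp

lemma prod_erase_mul_const {k : ℕ} (w : ℝ) (g : Fin (k+1) → ℝ) (j : Fin (k+1)) :
    (∏ l ∈ Finset.univ.erase j, (w * g l)) = w^k * ∏ l ∈ Finset.univ.erase j, g l := by
  rw [Finset.prod_mul_distrib, Finset.prod_const, Finset.card_erase_of_mem (Finset.mem_univ j)]
  congr 2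
  simp

lemma sum_mul_prod_erase {k : ℕ} (g : Fin k → ℝ) :
    ∑ j, g j * ∏ l ∈ Finset.univ.erase j, g l = (k:ℝ) * ∏ l, g l := by
  have h : ∀ j : Fin k, g j * ∏ l ∈ Finset.univ.erase j, g l = ∏ l, g l :=
    fun j => Finset.mul_prod_erase _ _ (Finset.mem_univ j)
  rw [Finset.sum_congr rfl (fun j _ => h j), Finset.sum_const]
  simp [mul_comm]

lemma sum_pull {n : ℕ} (G X : Fin n → ℝ) (c' : ℝ) :
    ∑ m, (G m * c') * X m = c' * ∑ m, G m * X m := by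
  rw [Finset.mul_sum]
  exact Finset.sum_congr rfl fun m _ => by ring

lemma sum_split {n : ℕ} (G : Fin n → ℝ) (a b : ℝ) (v1 v2 : Fin n → ℝ) :
    ∑ m, G m * (a * v2 m + v1 m * b)
      = a * (∑ m, G m * v2 m) + (∑ m, G m * v1 m) * b := by
  rw [Finset.mul_sum, Finset.sum_mul, ← Finset.sum_add_distrib]
  exact Finset.sum_congr rfl fun m _ => by ring

lemma sum_swap' {n k : ℕ} (G : Fin n → ℝ) (x : Fin k → Fin n → ℝ) (E : Fin k → ℝ) :
    ∑ j, (∑ m, G m * x j m) * E j = ∑ m, G m * ∑ j, x j m * E j := by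
  have h1 : ∀ j, (∑ m, G m * x j m) * E j = ∑ m, G m * (x j m * E j) := by
    intro j
    rw [Finset.sum_mul]
    exact Finset.sum_congr rfl fun m _ => by ring
  rw [Finset.sum_congr rfl fun j _ => h1 j, Finset.sum_comm]
  exact Finset.sum_congr rfl fun m _ => by rw [Finset.mul_sum]

lemma sum_eta {k n : ℕ} (gaK c' : ℝ) (G : Fin n → ℝ) (yv : Fin k → ℝ)
    (zv : Fin k → Fin n → ℝ) (E : Fin k → ℝ) :
    ∑ j, (gaK * yv j + ∑ m, G m * zv j m) * (c' * E j)
      = c' * (gaK * ∑ j, yv j * E j) + c' * ∑ m, G m * ∑ j, zv j m * E j := by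
  calc ∑ j, (gaK * yv j + ∑ m, G m * zv j m) * (c' * E j)
      = ∑ j, (c' * (gaK * (yv j * E j)) + c' * ((∑ m, G m * zv j m) * E j)) :=
        Finset.sum_congr rfl fun j _ => by ring
    _ = (∑ j, c' * (gaK * (yv j * E j))) + ∑ j, c' * ((∑ m, G m * zv j m) * E j) :=
        Finset.sum_add_distrib
    _ = c' * (gaK * ∑ j, yv j * E j) + c' * ∑ j, (∑ m, G m * zv j m) * E j := by
        rw [← Finset.mul_sum, ← Finset.mul_sum, ← Finset.mul_sum]
    _ = c' * (gaK * ∑ j, yv j * E j) + c' * ∑ m, G m * ∑ j, zv j m * E j := by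
        rw [sum_swap']

lemma sum_ind {p : ℕ} (k : ℕ) (hk : k < p+1) (X : Fin (p+1) → ℝ) :
    ∑ i : Fin (p+1), (if i.1 = k then (1:ℝ) else 0) * X i = X ⟨k,hk⟩ := by
  rw [Finset.sum_eq_single (⟨k,hk⟩ : Fin (p+1))]
  · rw [if_pos rfl, one_mul]
  · intro b _ hb
    rw [if_neg (fun h => hb (Fin.ext h)), zero_mul]
  · intro h; exact absurd (Finset.mem_univ _) h

lemma sum_ind0 {p : ℕ} (k : ℕ) (hk : p+1 ≤ k) (X : Fin (p+1) → ℝ) :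
    ∑ i : Fin (p+1), (if i.1 = k then (1:ℝ) else 0) * X i = 0 :=
  Finset.sum_eq_zero fun i _ => by
    rw [if_neg (by have := i.2; omega), zero_mul]

section
variable (p : ℕ) (f : ℝ → ℝ) (P : Vp p)

noncomputable def D3 : ℝ := iteratedDeriv (p+3) f (P (iy p))
noncomputable def D4 : ℝ := iteratedDeriv (p+4) f (P (iy p))
noncomputable def uu : ℝ := D3 p f P / D4 p f P
noncomputable def cc : ℝ := Real.sqrt ((uu p f P)^(p+3) * D3 p f P)
noncomputable def ww : ℝ := (uu p f P)⁻¹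
noncomputable def cinv : ℝ := (cc p f P)⁻¹
noncomputable def al (k : ℕ) : ℝ :=
  iteratedDeriv (k+2) f (P (iy p))
    + ∑ i : Fin (p+1), iteratedDeriv (k+2) (fun t => t^(i.1+1)) (P (iy p)) * P (iz p i)
noncomputable def ga (i : Fin (p+1)) : ℝ :=
  al p f P i.1 * ((i.1:ℝ)+2)⁻¹ * (uu p f P)^(i.1+1) * ((cc p f P)^2)⁻¹
noncomputable def Ga (i j : Fin (p+1)) : ℝ :=
  iteratedDeriv (i.1+1) (fun t => t^(j.1+1)) (P (iy p)) * (uu p f P)^(i.1+1) * ((cc p f P)^2)⁻¹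

section pos
variable (h3 : 0 < D3 p f P) (h4 : 0 < D4 p f P)
include h3 h4

lemma uu_pos : 0 < uu p f P := div_pos h3 h4
lemma cc_sq : (cc p f P)^2 = (uu p f P)^(p+3) * D3 p f P := by
  rw [cc, Real.sq_sqrt (mul_nonneg (pow_nonneg (uu_pos p f P h3 h4).le _) h3.le)]
lemma cc_pos : 0 < cc p f P := by
  rw [cc]; exact Real.sqrt_pos.2 (mul_pos (pow_pos (uu_pos p f P h3 h4) _) h3)
lemma ww_pos : 0 < ww p f P := by rw [ww]; exact inv_pos.2 (uu_pos p f P h3 h4)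

lemma ga_spec2 (k : ℕ) (hk : k < p+1) :
    iteratedDeriv (k+2) f (P (iy p))
      + ∑ i : Fin (p+1), iteratedDeriv (k+2) (fun t => t^(i.1+1)) (P (iy p)) * P (iz p i)
    = ga p f P ⟨k,hk⟩ * (((k:ℝ))+2) * ((cc p f P)^2 * (ww p f P)^(k+1)) := by
  have hu := (uu_pos p f P h3 h4).ne'
  have hc := (cc_pos p f P h3 h4).ne'
  have : iteratedDeriv (k+2) f (P (iy p))
      + ∑ i : Fin (p+1), iteratedDeriv (k+2) (fun t => t^(i.1+1)) (P (iy p)) * P (iz p i)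
      = al p f P k := rfl
  rw [this, ga, ww]
  have hk2 : ((k:ℝ)) + 2 ≠ 0 := by positivity
  field_simp
  rw [mul_assoc, ← mul_pow, mul_one_div_cancel hu, one_pow, mul_one]

lemma Ga_spec2 (k : ℕ) (hk : k < p+1) (m : Fin (p+1)) :
    iteratedDeriv (k+1) (fun t : ℝ => t^(m.1+1)) (P (iy p))
      = Ga p f P ⟨k,hk⟩ m * ((cc p f P)^2 * (ww p f P)^(k+1)) := by
  have hu := (uu_pos p f P h3 h4).ne'
  have hc := (cc_pos p f P h3 h4).ne'
  rw [Ga, ww]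
  field_simp
  rw [mul_assoc, ← mul_pow, mul_one_div_cancel hu, one_pow, mul_one]

lemma al_p1 : al p f P (p+1) = D3 p f P := by
  rw [al, D3]
  have h : ∀ i : Fin (p+1),
      iteratedDeriv (p+1+2) (fun t => t^(i.1+1)) (P (iy p)) * P (iz p i) = 0 := by
    intro i
    rw [pi_zero _ _ (by have := i.2; omega)]
    ring
  rw [Finset.sum_eq_zero (fun i _ => h i)]
  norm_num

lemma al_p2 : al p f P (p+2) = D4 p f P := by
  rw [al, D4]
  have h : ∀ i : Fin (p+1),
      iteratedDeriv (p+2+2) (fun t => t^(i.1+1)) (P (iy p)) * P (iz p i) = 0 := by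
    intro i
    rw [pi_zero _ _ (by have := i.2; omega)]
    ring
  rw [Finset.sum_eq_zero (fun i _ => h i)]
  norm_num

lemma cw_spec (k : ℕ) (h1 : p+1 ≤ k) (h2 : k ≤ p+2) :
    iteratedDeriv (k+2) f (P (iy p))
      + ∑ i : Fin (p+1), iteratedDeriv (k+2) (fun t => t^(i.1+1)) (P (iy p)) * P (iz p i)
    = (cc p f P)^2 * (ww p f P)^(k+2) := by
  have hu := (uu_pos p f P h3 h4).ne'
  have h : (iteratedDeriv (k+2) f (P (iy p))
      + ∑ i : Fin (p+1), iteratedDeriv (k+2) (fun t => t^(i.1+1)) (P (iy p)) * P (iz p i))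
      = al p f P k := rfl
  rw [h, cc_sq p f P h3 h4, ww]
  rcases (by omega : k = p+1 ∨ k = p+2) with hk | hk <;> subst hk
  · rw [al_p1 p f P h3 h4]
    field_simp
    rw [show p + 1 + 2 = p + 3 by ring, ← mul_pow, mul_one_div_cancel hu, one_pow]
  · rw [al_p2 p f P h3 h4]
    have h3' := h3.ne'
    have h4' := h4.ne'
    rw [uu] at hu ⊢
    field_simp
    rw [show p+2+2 = p+3+1 by ring, pow_succ (D4 p f P / D3 p f P), ← mul_assoc, mul_assoc (D3 p f P), ← mul_pow,
      div_mul_div_comm, mul_comm (D4 p f P), div_self (mul_ne_zero h3' h4'), one_pow, mul_one,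
      mul_div_cancel₀ _ h3']

end pos
end
/- ## generic matrix block -/
section mat
variable {p : ℕ} (G : Fin (p+1) → Fin (p+1) → ℝ) (g : Fin (p+1) → ℝ) (w : ℝ)

noncomputable def Qgen : Matrix (Fin (p+2)) (Fin (p+2)) ℝ := fun i j =>
  if hi : i.1 < p+1 then
    (if hj : j.1 < p+1 then G ⟨i.1,hi⟩ ⟨j.1,hj⟩ else g ⟨i.1,hi⟩)
  else (if j.1 < p+1 then 0 else w)

lemma Qgen_cc (i j : Fin (p+1)) : Qgen G g w i.castSucc j.castSucc = G i j := by
  have hi : (i.castSucc).1 < p+1 := by simp; omega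
  have hj : (j.castSucc).1 < p+1 := by simp; omega
  have e1 : (⟨(i.castSucc).1, hi⟩ : Fin (p+1)) = i := Fin.ext (by simp)
  have e2 : (⟨(j.castSucc).1, hj⟩ : Fin (p+1)) = j := Fin.ext (by simp)
  unfold Qgen
  rw [dif_pos hi, dif_pos hj, e1, e2]

lemma Qgen_cl (i : Fin (p+1)) : Qgen G g w i.castSucc (Fin.last (p+1)) = g i := by
  have hi : (i.castSucc).1 < p+1 := by simp; omega
  have e1 : (⟨(i.castSucc).1, hi⟩ : Fin (p+1)) = i := Fin.ext (by simp)
  unfold Qgen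
  rw [dif_pos hi, dif_neg (by simp), e1]

lemma Qgen_lc (j : Fin (p+1)) : Qgen G g w (Fin.last (p+1)) j.castSucc = 0 := by
  unfold Qgen
  rw [dif_neg (by simp), if_pos (by simp; omega)]

lemma Qgen_ll : Qgen G g w (Fin.last (p+1)) (Fin.last (p+1)) = w := by
  unfold Qgen
  rw [dif_neg (by simp), if_neg (by simp)]

lemma Qgen_bt (hG : ∀ i j : Fin (p+1), j < i → G i j = 0) :
    Matrix.BlockTriangular (Qgen G g w) id := by
  intro i j hij
  simp only [id] at hij
  unfold Qgen
  by_cases hi : i.1 < p+1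
  · rw [dif_pos hi, dif_pos (by omega)]
    exact hG _ _ (by simpa using hij)
  · rw [dif_neg hi, if_pos (by omega)]

lemma Qgen_det (hG : ∀ i j : Fin (p+1), j < i → G i j = 0)
    (hd : ∀ i, G i i ≠ 0) (hw : w ≠ 0) : (Qgen G g w).det ≠ 0 := by
  rw [Matrix.det_of_upperTriangular (Qgen_bt G g w hG), Fin.prod_univ_castSucc]
  exact mul_ne_zero
    (Finset.prod_ne_zero_iff.2 (fun i _ => by rw [Qgen_cc]; exact hd i))
    (by rw [Qgen_ll]; exact hw)

noncomputable def Qbgen : Matrix (Fin (p+2)) (Fin (p+2)) ℝ := ((Qgen G g w).transpose)⁻¹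

lemma QtQb (hdet : (Qgen G g w).det ≠ 0) :
    (Qgen G g w).transpose * Qbgen G g w = 1 := by
  apply Matrix.mul_nonsing_inv
  rw [Matrix.det_transpose]
  exact isUnit_iff_ne_zero.2 hdet

lemma Qgen_mulVec_inj (hdet : (Qgen G g w).det ≠ 0) (x : Fin (p+2) → ℝ)
    (hx : (Qgen G g w).mulVec x = 0) : x = 0 := by
  have h := Matrix.nonsing_inv_mul (Qgen G g w) (isUnit_iff_ne_zero.2 hdet)
  calc x = ((Qgen G g w)⁻¹ * Qgen G g w).mulVec x := by rw [h, Matrix.one_mulVec]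
  _ = (Qgen G g w)⁻¹.mulVec ((Qgen G g w).mulVec x) := by rw [Matrix.mulVec_mulVec]
  _ = 0 := by rw [hx, Matrix.mulVec_zero]

lemma Qbgen_mulVec_inj (hdet : (Qgen G g w).det ≠ 0) (x : Fin (p+2) → ℝ)
    (hx : (Qbgen G g w).mulVec x = 0) : x = 0 := by
  have h := QtQb G g w hdet
  calc x = ((Qgen G g w).transpose * Qbgen G g w).mulVec x := by rw [h, Matrix.one_mulVec]
  _ = ((Qgen G g w).transpose).mulVec ((Qbgen G g w).mulVec x) := by rw [Matrix.mulVec_mulVec]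
  _ = 0 := by rw [hx, Matrix.mulVec_zero]

lemma pairing {n : ℕ} (A B : Matrix (Fin n) (Fin n) ℝ) (h : A.transpose * B = 1)
    (x y : Fin n → ℝ) :
    ∑ c, (∑ d, A c d * x d) * (∑ e, B c e * y e) = ∑ d, x d * y d := by
  have step : ∀ c, (∑ d, A c d * x d) * (∑ e, B c e * y e)
      = ∑ d, ∑ e, (A c d * B c e) * (x d * y e) := by
    intro c
    rw [Finset.sum_mul_sum]
    apply Finset.sum_congr rfl; intro d _
    apply Finset.sum_congr rfl; intro e _
    ring
  rw [Finset.sum_congr rfl (fun c _ => step c), Finset.sum_comm]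
  have h2 : ∀ d, ∑ c, ∑ e, (A c d * B c e) * (x d * y e)
      = ∑ e, ((A.transpose * B) d e) * (x d * y e) := by
    intro d
    rw [Finset.sum_comm]
    apply Finset.sum_congr rfl; intro e _
    rw [Matrix.mul_apply, Finset.sum_mul]
    apply Finset.sum_congr rfl; intro c _
    rw [Matrix.transpose_apply]
  rw [Finset.sum_congr rfl (fun d _ => h2 d)]
  apply Finset.sum_congr rfl; intro d _
  rw [h]
  rw [Finset.sum_eq_single d]
  · simp [Matrix.one_apply]
  · intro e _ he
    simp [Matrix.one_apply, Ne.symm he]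
  · simp

end mat
section phi
variable (p : ℕ) (f : ℝ → ℝ) (P : Vp p)

noncomputable def QM : Matrix (Fin (p+2)) (Fin (p+2)) ℝ :=
  Qgen (Ga p f P) (ga p f P) (ww p f P)
noncomputable def QMb : Matrix (Fin (p+2)) (Fin (p+2)) ℝ :=
  Qbgen (Ga p f P) (ga p f P) (ww p f P)

def bco (ξ : Vp p) (d : Fin (p+2)) : ℝ :=
  if h : d.1 < p+1 then ξ (izb p ⟨d.1,h⟩) else ξ (iyb p)
def co (ξ : Vp p) (d : Fin (p+2)) : ℝ :=
  if h : d.1 < p+1 then ξ (iz p ⟨d.1,h⟩) else ξ (iy p)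

noncomputable def phiFun (ξ : Vp p) : Vp p := fun a =>
  if a.1 = 0 then cc p f P * ξ (ix p)
  else if a.1 = 1 then ww p f P * ξ (iy p)
  else if h : a.1 < p + 3 then
    ga p f P ⟨a.1-2, by omega⟩ * ξ (iy p) + ∑ j, Ga p f P ⟨a.1-2, by omega⟩ j * ξ (iz p j)
  else if a.1 = p+3 then cinv p f P * (ξ (ixb p) - FF p f P * ξ (ix p))
  else if a.1 = p+4 then ∑ d, QMb p f P (Fin.last (p+1)) d * bco p ξ d
  else ∑ d, QMb p f P (⟨a.1-(p+5), by have := a.2; omega⟩ : Fin (p+1)).castSucc d * bco p ξ d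

lemma phi_ix (ξ : Vp p) : phiFun p f P ξ (ix p) = cc p f P * ξ (ix p) := by
  simp [phiFun, ix]

lemma phi_iy (ξ : Vp p) : phiFun p f P ξ (iy p) = ww p f P * ξ (iy p) := by
  simp [phiFun, iy]

lemma phi_iz (ξ : Vp p) (i : Fin (p+1)) :
    phiFun p f P ξ (iz p i) = ga p f P i * ξ (iy p) + ∑ j, Ga p f P i j * ξ (iz p j) := by
  have h2 : (iz p i).1 = 2 + i.1 := rfl
  simp only [phiFun, h2]
  rw [if_neg (by omega), if_neg (by omega), dif_pos (by have := i.2; omega)]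
  have e : (⟨2 + i.1 - 2, by have := i.2; omega⟩ : Fin (p+1)) = i := by
    apply Fin.ext; simp
  rw [e]

lemma phi_ixb (ξ : Vp p) :
    phiFun p f P ξ (ixb p) = cinv p f P * (ξ (ixb p) - FF p f P * ξ (ix p)) := by
  have h2 : (ixb p).1 = p+3 := rfl
  simp only [phiFun, h2]
  rw [if_neg (by omega), if_neg (by omega), dif_neg (by omega)]
  simp

lemma phi_iyb (ξ : Vp p) :
    phiFun p f P ξ (iyb p) = ∑ d, QMb p f P (Fin.last (p+1)) d * bco p ξ d := by
  have h2 : (iyb p).1 = p+4 := rfl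
  simp only [phiFun, h2]
  rw [if_neg (by omega), if_neg (by omega), dif_neg (by omega), if_neg (by omega)]
  simp

lemma phi_izb (ξ : Vp p) (i : Fin (p+1)) :
    phiFun p f P ξ (izb p i) = ∑ d, QMb p f P i.castSucc d * bco p ξ d := by
  have h2 : (izb p i).1 = p+5+i.1 := rfl
  simp only [phiFun, h2]
  rw [if_neg (by omega), if_neg (by omega), dif_neg (by omega), if_neg (by omega),
    if_neg (by omega)]
  have e : (⟨p+5+i.1-(p+5), by have := i.2; omega⟩ : Fin (p+1)) = i := by
    apply Fin.ext; simp
  rw [e]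

/- wedge lemmas -/
lemma wphi_xy (ξ ζ : Vp p) :
    wdg p (ix p) (iy p) (phiFun p f P ξ) (phiFun p f P ζ)
      = cc p f P * ww p f P * wdg p (ix p) (iy p) ξ ζ := by
  simp only [wdg, phi_ix, phi_iy]
  ring

lemma wphi_xz (m : Fin (p+1)) (ξ ζ : Vp p) :
    wdg p (ix p) (iz p m) (phiFun p f P ξ) (phiFun p f P ζ)
      = cc p f P * (ga p f P m * wdg p (ix p) (iy p) ξ ζ
          + ∑ j, Ga p f P m j * wdg p (ix p) (iz p j) ξ ζ) := by
  simp only [wdg, phi_ix, phi_iz]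
  have h : ∑ j, Ga p f P m j * (ξ (ix p) * ζ (iz p j) - ξ (iz p j) * ζ (ix p))
      = ξ (ix p) * (∑ j, Ga p f P m j * ζ (iz p j))
        - (∑ j, Ga p f P m j * ξ (iz p j)) * ζ (ix p) := by
    rw [Finset.mul_sum, Finset.sum_mul, ← Finset.sum_sub_distrib]
    exact Finset.sum_congr rfl fun j _ => by ring
  rw [h]
  ring

end phi

section tensor
variable (p : ℕ) (f : ℝ → ℝ) (P : Vp p) (h3 : 0 < D3 p f P) (h4 : 0 < D4 p f P)
include h3 h4

lemma tensor_le (k : ℕ) (hk : k < p+1) (ξ₁ ξ₂ ξ₃ ξ₄ : Vp p) (η : Fin k → Vp p) :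
    AT p k (phiFun p f P ξ₁) (phiFun p f P ξ₂) (phiFun p f P ξ₃) (phiFun p f P ξ₄)
      (fun j => phiFun p f P (η j))
    = nR p f k P ξ₁ ξ₂ ξ₃ ξ₄ η := by
  rcases k with _ | k'
  · simp only [AT, nR, wphi_xy, wphi_xz, phi_iy, phi_iz, Finset.univ_eq_empty,
      Finset.sum_empty, Finset.prod_empty, mul_zero, Finset.sum_const_zero]
    rw [if_neg (by omega)]
    rw [sum_ind 0 hk]
    rw [ga_spec2 p f P h3 h4 0 hk]
    simp only [Ga_spec2 p f P h3 h4 0 hk]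
    rw [sum_pull, sum_split]
    ring
  · simp only [AT, nR, wphi_xy, wphi_xz, phi_iy, phi_iz]
    rw [if_neg (by omega)]
    rw [sum_ind (k'+1) hk, sum_ind (k'+1) hk]
    rw [ga_spec2 p f P h3 h4 (k'+1) hk]
    simp only [Ga_spec2 p f P h3 h4 (k'+1) hk]
    simp only [prod_erase_mul_const, prod_mul_const]
    rw [sum_eta]
    rw [sum_mul_prod_erase (fun l => η l (iy p))]
    rw [sum_pull, sum_pull, sum_split]
    push_cast
    ring

lemma tensor_gt (k : ℕ) (h1 : p+1 ≤ k) (h2 : k ≤ p+2) (ξ₁ ξ₂ ξ₃ ξ₄ : Vp p)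
    (η : Fin k → Vp p) :
    AT p k (phiFun p f P ξ₁) (phiFun p f P ξ₂) (phiFun p f P ξ₃) (phiFun p f P ξ₄)
      (fun j => phiFun p f P (η j))
    = nR p f k P ξ₁ ξ₂ ξ₃ ξ₄ η := by
  simp only [AT, nR, wphi_xy, wphi_xz, phi_iy, phi_iz]
  rw [if_pos h1]
  rw [sum_ind0 k h1, sum_ind0 k h1]
  have hz : ∀ m : Fin (p+1), iteratedDeriv (k+1) (fun t : ℝ => t^(m.1+1)) (P (iy p)) = 0 :=
    fun m => pi_zero _ _ (by have := m.2; omega) _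
  simp only [hz, zero_mul, Finset.sum_const_zero, mul_zero, add_zero]
  rw [cw_spec p f P h3 h4 k h1 h2]
  simp only [prod_mul_const]
  ring

end tensor

section gsec
variable (p : ℕ) (f : ℝ → ℝ) (P : Vp p)

lemma co_cast (ξ : Vp p) (i : Fin (p+1)) : co p ξ i.castSucc = ξ (iz p i) := by
  have hi : (i.castSucc).1 < p+1 := by simp; omega
  have e : (⟨(i.castSucc).1, hi⟩ : Fin (p+1)) = i := Fin.ext (by simp)
  rw [co, dif_pos hi, e]

lemma co_last (ξ : Vp p) : co p ξ (Fin.last (p+1)) = ξ (iy p) := by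
  rw [co, dif_neg (by simp)]

lemma bco_cast (ξ : Vp p) (i : Fin (p+1)) : bco p ξ i.castSucc = ξ (izb p i) := by
  have hi : (i.castSucc).1 < p+1 := by simp; omega
  have e : (⟨(i.castSucc).1, hi⟩ : Fin (p+1)) = i := Fin.ext (by simp)
  rw [bco, dif_pos hi, e]

lemma bco_last (ξ : Vp p) : bco p ξ (Fin.last (p+1)) = ξ (iyb p) := by
  rw [bco, dif_neg (by simp)]

variable (h3 : 0 < D3 p f P) (h4 : 0 < D4 p f P)
include h3 h4

lemma Ga_tri : ∀ i j : Fin (p+1), j < i → Ga p f P i j = 0 := by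
  intro i j hij
  rw [Ga, pi_zero _ _ (by exact_mod_cast Nat.succ_lt_succ hij)]
  ring

lemma Ga_diag : ∀ i : Fin (p+1), Ga p f P i i ≠ 0 := by
  intro i
  rw [Ga, pi_diag]
  have h1 : (Nat.factorial (i.1+1) : ℝ) ≠ 0 := Nat.cast_ne_zero.2 (Nat.factorial_ne_zero _)
  have h2 := (uu_pos p f P h3 h4).ne'
  have h5 := (cc_pos p f P h3 h4).ne'
  positivity

lemma QM_det : (QM p f P).det ≠ 0 :=
  Qgen_det _ _ _ (Ga_tri p f P h3 h4) (Ga_diag p f P h3 h4) (ww_pos p f P h3 h4).ne'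

lemma hQtQb : (QM p f P).transpose * QMb p f P = 1 :=
  QtQb _ _ _ (QM_det p f P h3 h4)

lemma hQbtQ : (QMb p f P).transpose * QM p f P = 1 := by
  have : (QMb p f P).transpose = (QM p f P)⁻¹ := by
    rw [QMb, Qbgen, Matrix.transpose_nonsing_inv, Matrix.transpose_transpose, QM]
  rw [this]
  exact Matrix.nonsing_inv_mul _ (isUnit_iff_ne_zero.2 (QM_det p f P h3 h4))

lemma phi_iyU (ξ : Vp p) :
    phiFun p f P ξ (iy p) = ∑ d, QM p f P (Fin.last (p+1)) d * co p ξ d := by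
  rw [phi_iy]
  rw [Fin.sum_univ_castSucc]
  have h1 : ∀ i : Fin (p+1), QM p f P (Fin.last (p+1)) i.castSucc * co p ξ i.castSucc = 0 := by
    intro i
    rw [QM, Qgen_lc, zero_mul]
  rw [Finset.sum_congr rfl (fun i _ => h1 i), Finset.sum_const_zero, QM, Qgen_ll, co_last]
  ring

lemma phi_izU (ξ : Vp p) (i : Fin (p+1)) :
    phiFun p f P ξ (iz p i) = ∑ d, QM p f P i.castSucc d * co p ξ d := by
  rw [phi_iz]
  conv_rhs => rw [Fin.sum_univ_castSucc]
  have h1 : ∀ j : Fin (p+1), QM p f P i.castSucc j.castSucc * co p ξ j.castSucc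
      = Ga p f P i j * ξ (iz p j) := by
    intro j
    rw [QM, Qgen_cc, co_cast]
  rw [Finset.sum_congr rfl (fun j _ => h1 j), QM, Qgen_cl, co_last]
  ring

lemma g_eq (u v : Vp p) :
    g0 p (phiFun p f P u) (phiFun p f P v) = gP p f P u v := by
  have hcc : cc p f P * cinv p f P = 1 := by
    rw [cinv]; exact mul_inv_cancel₀ (cc_pos p f P h3 h4).ne'
  rw [g0, gP, phi_ix, phi_ix, phi_ixb, phi_ixb,
    phi_iyU p f P h3 h4 u, phi_iyU p f P h3 h4 v, phi_iyb, phi_iyb]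
  have hz : ∀ i : Fin (p+1),
      phiFun p f P u (iz p i) * phiFun p f P v (izb p i)
        + phiFun p f P u (izb p i) * phiFun p f P v (iz p i)
      = (∑ d, QM p f P i.castSucc d * co p u d) * (∑ d, QMb p f P i.castSucc d * bco p v d)
        + (∑ d, QMb p f P i.castSucc d * bco p u d) * (∑ d, QM p f P i.castSucc d * co p v d) := by
    intro i
    rw [phi_izU p f P h3 h4, phi_izU p f P h3 h4, phi_izb, phi_izb]
  rw [Finset.sum_congr rfl (fun i _ => hz i)]
  have key : (∑ d, QM p f P (Fin.last (p+1)) d * co p u d)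
        * (∑ d, QMb p f P (Fin.last (p+1)) d * bco p v d)
      + (∑ d, QMb p f P (Fin.last (p+1)) d * bco p u d)
        * (∑ d, QM p f P (Fin.last (p+1)) d * co p v d)
      + ∑ i : Fin (p+1),
          ((∑ d, QM p f P i.castSucc d * co p u d) * (∑ d, QMb p f P i.castSucc d * bco p v d)
          + (∑ d, QMb p f P i.castSucc d * bco p u d) * (∑ d, QM p f P i.castSucc d * co p v d))
      = u (iy p) * v (iyb p) + u (iyb p) * v (iy p)
        + ∑ i : Fin (p+1), (u (iz p i) * v (izb p i) + u (izb p i) * v (iz p i)) := by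
    have hsum := Fin.sum_univ_castSucc (n := p+1)
      (f := fun c => (∑ d, QM p f P c d * co p u d) * (∑ d, QMb p f P c d * bco p v d)
          + (∑ d, QMb p f P c d * bco p u d) * (∑ d, QM p f P c d * co p v d))
    have lhs_eq : (∑ d, QM p f P (Fin.last (p+1)) d * co p u d)
          * (∑ d, QMb p f P (Fin.last (p+1)) d * bco p v d)
        + (∑ d, QMb p f P (Fin.last (p+1)) d * bco p u d)
          * (∑ d, QM p f P (Fin.last (p+1)) d * co p v d)
        + ∑ i : Fin (p+1),
            ((∑ d, QM p f P i.castSucc d * co p u d) * (∑ d, QMb p f P i.castSucc d * bco p v d)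
            + (∑ d, QMb p f P i.castSucc d * bco p u d) * (∑ d, QM p f P i.castSucc d * co p v d))
        = ∑ c : Fin (p+2),
            ((∑ d, QM p f P c d * co p u d) * (∑ d, QMb p f P c d * bco p v d)
            + (∑ d, QMb p f P c d * bco p u d) * (∑ d, QM p f P c d * co p v d)) := by
      rw [hsum]; ring
    rw [lhs_eq, Finset.sum_add_distrib,
      pairing (QM p f P) (QMb p f P) (hQtQb p f P h3 h4) (co p u) (bco p v),
      pairing (QMb p f P) (QM p f P) (hQbtQ p f P h3 h4) (bco p u) (co p v)]
    rw [← Finset.sum_add_distrib, Fin.sum_univ_castSucc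
      (f := fun d => co p u d * bco p v d + bco p u d * co p v d)]
    simp only [co_cast, co_last, bco_cast, bco_last]
    ring
  linear_combination key + (u (ix p) * (v (ixb p) - FF p f P * v (ix p))
    + v (ix p) * (u (ixb p) - FF p f P * u (ix p))) * hcc

end gsec

section lin
variable (p : ℕ) (f : ℝ → ℝ) (P : Vp p)

lemma bco_add (ξ ζ : Vp p) (d : Fin (p+2)) :
    bco p (ξ + ζ) d = bco p ξ d + bco p ζ d := by
  rw [bco, bco, bco]; split_ifs <;> simp

lemma bco_smul (r : ℝ) (ξ : Vp p) (d : Fin (p+2)) :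
    bco p (r • ξ) d = r * bco p ξ d := by
  rw [bco, bco]; split_ifs <;> simp

lemma phi_add (ξ ζ : Vp p) :
    phiFun p f P (ξ + ζ) = phiFun p f P ξ + phiFun p f P ζ := by
  funext a
  simp only [phiFun, Pi.add_apply, bco_add]
  split_ifs <;> (try simp only [mul_add, add_mul, Finset.sum_add_distrib]) <;> ring

lemma phi_smul (r : ℝ) (ξ : Vp p) :
    phiFun p f P (r • ξ) = r • phiFun p f P ξ := by
  have hpull : ∀ {n : ℕ} (G x : Fin n → ℝ), ∑ m, G m * (r * x m) = r * ∑ m, G m * x m := by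
    intro n G x
    rw [Finset.mul_sum]
    exact Finset.sum_congr rfl fun m _ => by ring
  funext a
  simp only [phiFun, Pi.smul_apply, smul_eq_mul, bco_smul]
  split_ifs <;> (try simp only [hpull]) <;> ring

noncomputable def phiLin : Vp p →ₗ[ℝ] Vp p where
  toFun := phiFun p f P
  map_add' := phi_add p f P
  map_smul' := phi_smul p f P

variable (h3 : 0 < D3 p f P) (h4 : 0 < D4 p f P)
include h3 h4

lemma phi_inj : Function.Injective (phiLin p f P) := by
  rw [injective_iff_map_eq_zero]
  intro ξ hξ
  have hv : ∀ a, phiFun p f P ξ a = 0 := fun a => congrFun hξ a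
  have hcne := (cc_pos p f P h3 h4).ne'
  have hwne := (ww_pos p f P h3 h4).ne'
  have hx : ξ (ix p) = 0 := by
    have := hv (ix p); rw [phi_ix] at this
    rcases mul_eq_zero.1 this with h | h
    · exact absurd h hcne
    · exact h
  have hco : co p ξ = 0 := by
    apply Qgen_mulVec_inj (Ga p f P) (ga p f P) (ww p f P) (QM_det p f P h3 h4)
    funext c
    have : (Qgen (Ga p f P) (ga p f P) (ww p f P)).mulVec (co p ξ) c
        = ∑ d, QM p f P c d * co p ξ d := by
      rw [QM]; rfl
    rw [this]
    refine Fin.lastCases ?_ (fun i => ?_) c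
    · rw [← phi_iyU p f P h3 h4]; exact hv (iy p)
    · rw [← phi_izU p f P h3 h4]; exact hv (iz p i)
  have hy : ξ (iy p) = 0 := by
    have := congrFun hco (Fin.last (p+1)); rwa [co_last] at this
  have hz : ∀ i : Fin (p+1), ξ (iz p i) = 0 := by
    intro i
    have := congrFun hco i.castSucc; rwa [co_cast] at this
  have hxb : ξ (ixb p) = 0 := by
    have h := hv (ixb p); rw [phi_ixb] at h
    have hcinv : cinv p f P ≠ 0 := by
      rw [cinv]; exact inv_ne_zero hcne
    rcases mul_eq_zero.1 h with h' | h'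
    · exact absurd h' hcinv
    · rw [hx, mul_zero, sub_zero] at h'; exact h'
  have hbco : bco p ξ = 0 := by
    apply Qbgen_mulVec_inj (Ga p f P) (ga p f P) (ww p f P) (QM_det p f P h3 h4)
    funext c
    have : (Qbgen (Ga p f P) (ga p f P) (ww p f P)).mulVec (bco p ξ) c
        = ∑ d, QMb p f P c d * bco p ξ d := by
      rw [QMb]; rfl
    rw [this]
    refine Fin.lastCases ?_ (fun i => ?_) c
    · rw [← phi_iyb]; exact hv (iyb p)
    · rw [← phi_izb]; exact hv (izb p i)
  have hyb : ξ (iyb p) = 0 := by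
    have := congrFun hbco (Fin.last (p+1)); rwa [bco_last] at this
  have hzb : ∀ i : Fin (p+1), ξ (izb p i) = 0 := by
    intro i
    have := congrFun hbco i.castSucc; rwa [bco_cast] at this
  funext a
  show ξ a = 0
  by_cases h0 : a.1 = 0
  · rw [show a = ix p from Fin.ext h0]; exact hx
  by_cases h1 : a.1 = 1
  · rw [show a = iy p from Fin.ext h1]; exact hy
  by_cases h2 : a.1 < p+3
  · have hi : a.1 - 2 < p+1 := by omega
    rw [show a = iz p ⟨a.1-2, hi⟩ from Fin.ext (by show a.1 = 2 + (a.1-2); omega)]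
    exact hz _
  by_cases h3' : a.1 = p+3
  · rw [show a = ixb p from Fin.ext h3']; exact hxb
  by_cases h4' : a.1 = p+4
  · rw [show a = iyb p from Fin.ext h4']; exact hyb
  · have hi : a.1 - (p+5) < p+1 := by have := a.2; omega
    rw [show a = izb p ⟨a.1-(p+5), hi⟩ from Fin.ext (by show a.1 = p+5+(a.1-(p+5)); omega)]
    exact hzb _

end lin
end GN

/-- if f^{(p+3)} > 0 and f^{(p+4)} > 0 everywhere, then
𝒰^{p+2}_{2p+6} = (ℝ^m, g⁰, A^0, …, A^{p+2}) is a (p+2)-model for M_{2p+6,f}: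
for every point P there is a linear isomorphism φ of ℝ^m carrying g_P to g⁰ and
∇^kR_P to A^k for all 0 ≤ k ≤ p+2. -/


theorem curvature_homogeneous_p_plus_two_model (p : ℕ) (f : ℝ → ℝ) (hf : ContDiff ℝ (⊤ : ℕ∞) f)
    (hf3 : ∀ y : ℝ, 0 < iteratedDeriv (p+3) f y)
    (hf4 : ∀ y : ℝ, 0 < iteratedDeriv (p+4) f y)
    (P : Vp p) :
    ∃ φ : Vp p ≃ₗ[ℝ] Vp p,
      (∀ u v : Vp p, g0 p (φ u) (φ v) = gP p f P u v) ∧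
      (∀ k : ℕ, k ≤ p+2 → ∀ (ξ₁ ξ₂ ξ₃ ξ₄ : Vp p) (η : Fin k → Vp p),
        AT p k (φ ξ₁) (φ ξ₂) (φ ξ₃) (φ ξ₄) (fun j => φ (η j))
          = nR p f k P ξ₁ ξ₂ ξ₃ ξ₄ η) := by
  have h3 : 0 < GN.D3 p f P := hf3 _
  have h4 : 0 < GN.D4 p f P := hf4 _
  have hinj := GN.phi_inj p f P h3 h4
  have hbij : Function.Bijective (GN.phiLin p f P) :=
    ⟨hinj, (LinearMap.injective_iff_surjective).1 hinj⟩
  refine ⟨LinearEquiv.ofBijective (GN.phiLin p f P) hbij, fun u v => ?_, fun k hk ξ₁ ξ₂ ξ₃ ξ₄ η => ?_⟩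
  · have hco : ∀ ξ, (LinearEquiv.ofBijective (GN.phiLin p f P) hbij) ξ = GN.phiFun p f P ξ :=
      fun ξ => rfl
    rw [hco, hco]
    exact GN.g_eq p f P h3 h4 u v
  · have hco : ∀ ξ, (LinearEquiv.ofBijective (GN.phiLin p f P) hbij) ξ = GN.phiFun p f P ξ :=
      fun ξ => rfl
    simp only [hco]
    by_cases hkp : k < p+1
    · exact GN.tensor_le p f P h3 h4 k hkp ξ₁ ξ₂ ξ₃ ξ₄ η
    · exact GN.tensor_gt p f P h3 h4 k (by omega) hk ξ₁ ξ₂ ξ₃ ξ₄ η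
end

section
/- For every P ∈ ℝ^m and all ξ₁, ξ₂, ξ₃, ξ₄ ∈ ℝ^m one has 𝓡_P(ξ₁, ξ₂) ∘ 𝓡_P(ξ₃, ξ₄) = 0 as endomorphisms of ℝ^m. Consequently the Jacobi operator J_P(ξ) : η ↦ 𝓡_P(η, ξ)ξ satisfies J_P(ξ)² = 0 for every ξ, and 𝓡_P(ξ₁, ξ₂)² = 0 for all ξ₁, ξ₂; hence J_P(ξ) and each curvature operator 𝓡_P(ξ₁, ξ₂) are nilpotent with 0 as their only eigenvalue (M_{2p+6,f} is nilpotent Osserman and nilpotent Ivanov–Petrova). -/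
lemma fne {n : ℕ} {a b : Fin n} (h : a.1 ≠ b.1) : a ≠ b := fun e => h (congrArg Fin.val e)

section aux
variable (p : ℕ) (f : ℝ → ℝ) (P : Vp p)

/-- Pairing with the dual basis vectors extracts components of `B`. -/
lemma gP_single_ixb (B : Vp p) : gP p f P B (Pi.single (ixb p) 1) = B (ix p) := by
  unfold gP
  rw [Pi.single_eq_same,
    Pi.single_eq_of_ne (fne (show (0:ℕ) ≠ p+3 by omega)) 1,
    Pi.single_eq_of_ne (fne (show (p+4:ℕ) ≠ p+3 by omega)) 1,
    Pi.single_eq_of_ne (fne (show (1:ℕ) ≠ p+3 by omega)) 1,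
    Finset.sum_eq_zero (fun i _ => by
      rw [Pi.single_eq_of_ne (fne (show (p+5+i.1:ℕ) ≠ p+3 by omega)) 1,
        Pi.single_eq_of_ne (fne (show (2+i.1:ℕ) ≠ p+3 by have := i.2; omega)) 1]
      ring)]
  ring

lemma gP_single_ix (B : Vp p) :
    gP p f P B (Pi.single (ix p) 1) = B (ixb p) - 2 * FF p f P * B (ix p) := by
  unfold gP
  rw [Pi.single_eq_same,
    Pi.single_eq_of_ne (fne (show (p+3:ℕ) ≠ 0 by omega)) 1,
    Pi.single_eq_of_ne (fne (show (p+4:ℕ) ≠ 0 by omega)) 1,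
    Pi.single_eq_of_ne (fne (show (1:ℕ) ≠ 0 by omega)) 1,
    Finset.sum_eq_zero (fun i _ => by
      rw [Pi.single_eq_of_ne (fne (show (p+5+i.1:ℕ) ≠ 0 by omega)) 1,
        Pi.single_eq_of_ne (fne (show (2+i.1:ℕ) ≠ 0 by omega)) 1]
      ring)]
  ring

lemma gP_single_iyb (B : Vp p) : gP p f P B (Pi.single (iyb p) 1) = B (iy p) := by
  unfold gP
  rw [Pi.single_eq_same,
    Pi.single_eq_of_ne (fne (show (p+3:ℕ) ≠ p+4 by omega)) 1,
    Pi.single_eq_of_ne (fne (show (0:ℕ) ≠ p+4 by omega)) 1,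
    Pi.single_eq_of_ne (fne (show (1:ℕ) ≠ p+4 by omega)) 1,
    Finset.sum_eq_zero (fun i _ => by
      rw [Pi.single_eq_of_ne (fne (show (p+5+i.1:ℕ) ≠ p+4 by omega)) 1,
        Pi.single_eq_of_ne (fne (show (2+i.1:ℕ) ≠ p+4 by have := i.2; omega)) 1]
      ring)]
  ring

lemma gP_single_iy (B : Vp p) : gP p f P B (Pi.single (iy p) 1) = B (iyb p) := by
  unfold gP
  rw [Pi.single_eq_same,
    Pi.single_eq_of_ne (fne (show (p+3:ℕ) ≠ 1 by omega)) 1,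
    Pi.single_eq_of_ne (fne (show (0:ℕ) ≠ 1 by omega)) 1,
    Pi.single_eq_of_ne (fne (show (p+4:ℕ) ≠ 1 by omega)) 1,
    Finset.sum_eq_zero (fun i _ => by
      rw [Pi.single_eq_of_ne (fne (show (p+5+i.1:ℕ) ≠ 1 by omega)) 1,
        Pi.single_eq_of_ne (fne (show (2+i.1:ℕ) ≠ 1 by omega)) 1]
      ring)]
  ring

lemma gP_single_izb (B : Vp p) (j : Fin (p+1)) :
    gP p f P B (Pi.single (izb p j) 1) = B (iz p j) := by
  unfold gP
  rw [Pi.single_eq_of_ne (fne (show (p+3:ℕ) ≠ p+5+j.1 by omega)) 1,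
    Pi.single_eq_of_ne (fne (show (0:ℕ) ≠ p+5+j.1 by omega)) 1,
    Pi.single_eq_of_ne (fne (show (p+4:ℕ) ≠ p+5+j.1 by omega)) 1,
    Pi.single_eq_of_ne (fne (show (1:ℕ) ≠ p+5+j.1 by omega)) 1,
    Finset.sum_eq_single_of_mem j (Finset.mem_univ j) (fun i _ hij => by
      rw [Pi.single_eq_of_ne (fne (show (p+5+i.1:ℕ) ≠ p+5+j.1 by
          have := Fin.val_ne_of_ne hij; omega)) 1,
        Pi.single_eq_of_ne (fne (show (2+i.1:ℕ) ≠ p+5+j.1 by have := i.2; omega)) 1]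
      ring),
    Pi.single_eq_same,
    Pi.single_eq_of_ne (fne (show (2+j.1:ℕ) ≠ p+5+j.1 by have := j.2; omega)) 1]
  ring

lemma gP_single_iz (B : Vp p) (j : Fin (p+1)) :
    gP p f P B (Pi.single (iz p j) 1) = B (izb p j) := by
  unfold gP
  rw [Pi.single_eq_of_ne (fne (show (p+3:ℕ) ≠ 2+j.1 by have := j.2; omega)) 1,
    Pi.single_eq_of_ne (fne (show (0:ℕ) ≠ 2+j.1 by omega)) 1,
    Pi.single_eq_of_ne (fne (show (p+4:ℕ) ≠ 2+j.1 by have := j.2; omega)) 1,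
    Pi.single_eq_of_ne (fne (show (1:ℕ) ≠ 2+j.1 by omega)) 1,
    Finset.sum_eq_single_of_mem j (Finset.mem_univ j) (fun i _ hij => by
      rw [Pi.single_eq_of_ne (fne (show (p+5+i.1:ℕ) ≠ 2+j.1 by have := j.2; omega)) 1,
        Pi.single_eq_of_ne (fne (show (2+i.1:ℕ) ≠ 2+j.1 by
          have := Fin.val_ne_of_ne hij; omega)) 1]
      ring),
    Pi.single_eq_same,
    Pi.single_eq_of_ne (fne (show (p+5+j.1:ℕ) ≠ 2+j.1 by have := j.2; omega)) 1]
  ring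

/-- Nondegeneracy of g: a vector pairing to zero with everything vanishes. -/
lemma gP_nondeg (B : Vp p) (h : ∀ w : Vp p, gP p f P B w = 0) : B = 0 := by
  have hx : B (ix p) = 0 := by rw [← gP_single_ixb p f P B]; exact h _
  have hxb : B (ixb p) = 0 := by
    have := h (Pi.single (ix p) 1); rw [gP_single_ix p f P B, hx] at this
    linarith
  have hy : B (iy p) = 0 := by rw [← gP_single_iyb p f P B]; exact h _
  have hyb : B (iyb p) = 0 := by rw [← gP_single_iy p f P B]; exact h _
  have hz : ∀ j, B (iz p j) = 0 := fun j => by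
    rw [← gP_single_izb p f P B j]; exact h _
  have hzb : ∀ j, B (izb p j) = 0 := fun j => by
    rw [← gP_single_iz p f P B j]; exact h _
  funext a
  show B a = 0
  by_cases e0 : a.1 = 0
  · rw [show a = ix p from Fin.ext (show a.1 = 0 from e0)]; exact hx
  by_cases e1 : a.1 = 1
  · rw [show a = iy p from Fin.ext (show a.1 = 1 from e1)]; exact hy
  by_cases e2 : a.1 ≤ p+2
  · have hi : a.1 - 2 < p+1 := by omega
    rw [show a = iz p ⟨a.1-2, hi⟩ from Fin.ext (show a.1 = 2 + (a.1-2) by omega)]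
    exact hz _
  by_cases e3 : a.1 = p+3
  · rw [show a = ixb p from Fin.ext (show a.1 = p+3 from e3)]; exact hxb
  by_cases e4 : a.1 = p+4
  · rw [show a = iyb p from Fin.ext (show a.1 = p+4 from e4)]; exact hyb
  · have h6 := a.2
    have hi : a.1 - (p+5) < p+1 := by omega
    rw [show a = izb p ⟨a.1-(p+5), hi⟩ from
      Fin.ext (show a.1 = p+5 + (a.1-(p+5)) by omega)]
    exact hzb _

/-- nR vanishes when the first argument has no unbarred components. -/
lemma nR_zero1 (ξ₁ ξ₂ ξ₃ ξ₄ : Vp p) (η : Fin 0 → Vp p)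
    (hx : ξ₁ (ix p) = 0) (hy : ξ₁ (iy p) = 0) (hz : ∀ i, ξ₁ (iz p i) = 0) :
    nR p f 0 P ξ₁ ξ₂ ξ₃ ξ₄ η = 0 := by
  simp [nR, wdg, hx, hy, hz]

/-- nR vanishes when the third argument has no unbarred components. -/
lemma nR_zero3 (ξ₁ ξ₂ ξ₃ ξ₄ : Vp p) (η : Fin 0 → Vp p)
    (hx : ξ₃ (ix p) = 0) (hy : ξ₃ (iy p) = 0) (hz : ∀ i, ξ₃ (iz p i) = 0) :
    nR p f 0 P ξ₁ ξ₂ ξ₃ ξ₄ η = 0 := by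
  simp [nR, wdg, hx, hy, hz]

/-- nR vanishes when the fourth argument has no unbarred components. -/
lemma nR_zero4 (ξ₁ ξ₂ ξ₃ ξ₄ : Vp p) (η : Fin 0 → Vp p)
    (hx : ξ₄ (ix p) = 0) (hy : ξ₄ (iy p) = 0) (hz : ∀ i, ξ₄ (iz p i) = 0) :
    nR p f 0 P ξ₁ ξ₂ ξ₃ ξ₄ η = 0 := by
  simp [nR, wdg, hx, hy, hz]

end aux
/-- if 𝓡_P is the (unique) curvature operator with
g_P(𝓡_P(ξ₁,ξ₂)ξ₃, ξ₄) = R_P(ξ₁,ξ₂,ξ₃,ξ₄), then 𝓡_P(ξ₁,ξ₂) ∘ 𝓡_P(ξ₃,ξ₄) = 0;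
consequently the Jacobi operator J_P(ξ) : η ↦ 𝓡_P(η,ξ)ξ satisfies J_P(ξ)² = 0,
each 𝓡_P(ξ₁,ξ₂)² = 0, and 0 is the only eigenvalue of J_P(ξ) and of 𝓡_P(ξ₁,ξ₂)
(M_{2p+6,f} is nilpotent Osserman and nilpotent Ivanov–Petrova). -/
theorem nilpotent_Osserman_Ivanov_Petrova (p : ℕ) (f : ℝ → ℝ) (hf : ContDiff ℝ (⊤ : ℕ∞) f)
    (P : Vp p) (curvOp : Vp p → Vp p → Vp p → Vp p)
    (hcurv : ∀ ξ₁ ξ₂ ξ₃ ξ₄ : Vp p,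
      gP p f P (curvOp ξ₁ ξ₂ ξ₃) ξ₄ = nR p f 0 P ξ₁ ξ₂ ξ₃ ξ₄ (fun j => j.elim0)) :
    (∀ ξ₁ ξ₂ ξ₃ ξ₄ v : Vp p, curvOp ξ₁ ξ₂ (curvOp ξ₃ ξ₄ v) = 0) ∧
    (∀ ξ η : Vp p, curvOp (curvOp η ξ ξ) ξ ξ = 0) ∧
    (∀ ξ₁ ξ₂ v : Vp p, curvOp ξ₁ ξ₂ (curvOp ξ₁ ξ₂ v) = 0) ∧
    (∀ (ξ : Vp p) (μ : ℝ) (v : Vp p), v ≠ 0 → curvOp v ξ ξ = μ • v → μ = 0) ∧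
    (∀ (ξ₁ ξ₂ : Vp p) (μ : ℝ) (v : Vp p), v ≠ 0 → curvOp ξ₁ ξ₂ v = μ • v → μ = 0) := by
  -- the image of curvOp has no unbarred components
  have hub : ∀ ξ₁ ξ₂ ξ₃ : Vp p,
      curvOp ξ₁ ξ₂ ξ₃ (ix p) = 0 ∧ curvOp ξ₁ ξ₂ ξ₃ (iy p) = 0 ∧
      ∀ i, curvOp ξ₁ ξ₂ ξ₃ (iz p i) = 0 := by
    intro ξ₁ ξ₂ ξ₃
    refine ⟨?_, ?_, fun j => ?_⟩
    · rw [← gP_single_ixb p f P (curvOp ξ₁ ξ₂ ξ₃), hcurv]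
      exact nR_zero4 p f P _ _ _ _ _
        (Pi.single_eq_of_ne (fne (show (0:ℕ) ≠ p+3 by omega)) 1)
        (Pi.single_eq_of_ne (fne (show (1:ℕ) ≠ p+3 by omega)) 1)
        (fun i => Pi.single_eq_of_ne
          (fne (show (2+i.1:ℕ) ≠ p+3 by have := i.2; omega)) 1)
    · rw [← gP_single_iyb p f P (curvOp ξ₁ ξ₂ ξ₃), hcurv]
      exact nR_zero4 p f P _ _ _ _ _
        (Pi.single_eq_of_ne (fne (show (0:ℕ) ≠ p+4 by omega)) 1)
        (Pi.single_eq_of_ne (fne (show (1:ℕ) ≠ p+4 by omega)) 1)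
        (fun i => Pi.single_eq_of_ne
          (fne (show (2+i.1:ℕ) ≠ p+4 by have := i.2; omega)) 1)
    · rw [← gP_single_izb p f P (curvOp ξ₁ ξ₂ ξ₃) j, hcurv]
      exact nR_zero4 p f P _ _ _ _ _
        (Pi.single_eq_of_ne (fne (show (0:ℕ) ≠ p+5+j.1 by omega)) 1)
        (Pi.single_eq_of_ne (fne (show (1:ℕ) ≠ p+5+j.1 by omega)) 1)
        (fun i => Pi.single_eq_of_ne
          (fne (show (2+i.1:ℕ) ≠ p+5+j.1 by have := i.2; omega)) 1)
  have main : ∀ ξ₁ ξ₂ ξ₃ ξ₄ v : Vp p, curvOp ξ₁ ξ₂ (curvOp ξ₃ ξ₄ v) = 0 := by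
    intro ξ₁ ξ₂ ξ₃ ξ₄ v
    obtain ⟨hx, hy, hz⟩ := hub ξ₃ ξ₄ v
    exact gP_nondeg p f P _ (fun w => by
      rw [hcurv]; exact nR_zero3 p f P _ _ _ _ _ hx hy hz)
  have jac : ∀ ξ η : Vp p, curvOp (curvOp η ξ ξ) ξ ξ = 0 := by
    intro ξ η
    obtain ⟨hx, hy, hz⟩ := hub η ξ ξ
    exact gP_nondeg p f P _ (fun w => by
      rw [hcurv]; exact nR_zero1 p f P _ _ _ _ _ hx hy hz)
  refine ⟨main, jac, fun ξ₁ ξ₂ v => main ξ₁ ξ₂ ξ₁ ξ₂ v, ?_, ?_⟩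
  · intro ξ μ v hv he
    by_contra hμ
    obtain ⟨hx, hy, hz⟩ := hub v ξ ξ
    rw [he] at hx hy hz
    have hx' : v (ix p) = 0 := by
      have := hx; simp only [Pi.smul_apply, smul_eq_mul] at this
      exact (mul_eq_zero.mp this).resolve_left hμ
    have hy' : v (iy p) = 0 := by
      have := hy; simp only [Pi.smul_apply, smul_eq_mul] at this
      exact (mul_eq_zero.mp this).resolve_left hμ
    have hz' : ∀ i, v (iz p i) = 0 := fun i => by
      have := hz i; simp only [Pi.smul_apply, smul_eq_mul] at this
      exact (mul_eq_zero.mp this).resolve_left hμ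
    have h0 : (μ • v : Vp p) = 0 := by
      rw [← he]
      exact gP_nondeg p f P _ (fun w => by
        rw [hcurv]; exact nR_zero1 p f P _ _ _ _ _ hx' hy' hz')
    rcases smul_eq_zero.mp h0 with h | h
    · exact hμ h
    · exact hv h
  · intro ξ₁ ξ₂ μ v hv he
    by_contra hμ
    obtain ⟨hx, hy, hz⟩ := hub ξ₁ ξ₂ v
    rw [he] at hx hy hz
    have hx' : v (ix p) = 0 := by
      have := hx; simp only [Pi.smul_apply, smul_eq_mul] at this
      exact (mul_eq_zero.mp this).resolve_left hμ
    have hy' : v (iy p) = 0 := by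
      have := hy; simp only [Pi.smul_apply, smul_eq_mul] at this
      exact (mul_eq_zero.mp this).resolve_left hμ
    have hz' : ∀ i, v (iz p i) = 0 := fun i => by
      have := hz i; simp only [Pi.smul_apply, smul_eq_mul] at this
      exact (mul_eq_zero.mp this).resolve_left hμ
    have h0 : (μ • v : Vp p) = 0 := by
      rw [← he]
      exact gP_nondeg p f P _ (fun w => by
        rw [hcurv]; exact nR_zero3 p f P _ _ _ _ _ hx' hy' hz')
    rcases smul_eq_zero.mp h0 with h | h
    · exact hμ h
    · exact hv h
end

section
/- For P ∈ ℝ^m set 𝒱̄ := span{∂x̄, ∂ȳ, ∂z̄_0, …, ∂z̄_p} and 𝒱_P := span{∂x + F(y, z⃗)∂x̄, ∂y, ∂z_0, …, ∂z_p}. Then: (i) ℝ^m = 𝒱_P ⊕ 𝒱̄; (ii) both 𝒱_P and 𝒱̄ are totally isotropic for g_P, i.e. g_P vanishes identically on each of these (p+3)-dimensional subspaces; and (iii) for every k ≥ 0, ∇^kR_P(ξ₁, …, ξ_{4+k}) = 0 whenever at least one of the arguments ξ_j lies in 𝒱̄. Consequently each ∇^kR_P is the pullback, under the projection of ℝ^m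 onto 𝒱_P along 𝒱̄, of a tensor on the totally isotropic subspace 𝒱_P (this is the mechanism by which all scalar Weyl invariants of M_{2p+6,f} vanish). -/
/-- 𝒱̄ = span{∂x̄, ∂ȳ, ∂z̄_0, …, ∂z̄_p}. -/
def Vbar (p : ℕ) : Submodule ℝ (Vp p) :=
  Submodule.span ℝ ({Pi.single (ixb p) 1, Pi.single (iyb p) 1} ∪
    Set.range (fun i : Fin (p+1) => Pi.single (izb p i) 1))

/-- 𝒱_P = span{∂x + F(y,z⃗)∂x̄, ∂y, ∂z_0, …, ∂z_p}. -/
noncomputable def VPspan (p : ℕ) (f : ℝ → ℝ) (P : Vp p) : Submodule ℝ (Vp p) :=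
  Submodule.span ℝ (({Pi.single (ix p) 1 + FF p f P • (Pi.single (ixb p) 1 : Vp p),
    Pi.single (iy p) 1} : Set (Vp p)) ∪ Set.range (fun i : Fin (p+1) => Pi.single (iz p i) 1))

section Aux

variable {p : ℕ}

/-- evaluation of a basis single at a different index -/
lemma sva {n : ℕ} {a b : Fin n} (h : b.1 ≠ a.1) : (Pi.single a 1 : Fin n → ℝ) b = 0 :=
  Pi.single_eq_of_ne (Fin.ne_of_val_ne h) 1

@[simp] lemma s_xb_x : (Pi.single (ixb p) 1 : Vp p) (ix p) = 0 := sva (show (0:ℕ) ≠ p+3 by omega)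
@[simp] lemma s_xb_y : (Pi.single (ixb p) 1 : Vp p) (iy p) = 0 := sva (show (1:ℕ) ≠ p+3 by omega)
@[simp] lemma s_xb_z (i : Fin (p+1)) : (Pi.single (ixb p) 1 : Vp p) (iz p i) = 0 :=
  sva (show 2 + i.1 ≠ p+3 by have := i.2; omega)
@[simp] lemma s_yb_x : (Pi.single (iyb p) 1 : Vp p) (ix p) = 0 := sva (show (0:ℕ) ≠ p+4 by omega)
@[simp] lemma s_yb_y : (Pi.single (iyb p) 1 : Vp p) (iy p) = 0 := sva (show (1:ℕ) ≠ p+4 by omega)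
@[simp] lemma s_yb_z (i : Fin (p+1)) : (Pi.single (iyb p) 1 : Vp p) (iz p i) = 0 :=
  sva (show 2 + i.1 ≠ p+4 by have := i.2; omega)
@[simp] lemma s_zb_x (i : Fin (p+1)) : (Pi.single (izb p i) 1 : Vp p) (ix p) = 0 :=
  sva (show (0:ℕ) ≠ p+5+i.1 by omega)
@[simp] lemma s_zb_y (i : Fin (p+1)) : (Pi.single (izb p i) 1 : Vp p) (iy p) = 0 :=
  sva (show (1:ℕ) ≠ p+5+i.1 by omega)
@[simp] lemma s_zb_z (i j : Fin (p+1)) : (Pi.single (izb p i) 1 : Vp p) (iz p j) = 0 :=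
  sva (show 2 + j.1 ≠ p+5+i.1 by have := j.2; omega)
@[simp] lemma s_x_xb : (Pi.single (ix p) 1 : Vp p) (ixb p) = 0 := sva (show p+3 ≠ (0:ℕ) by omega)
@[simp] lemma s_x_yb : (Pi.single (ix p) 1 : Vp p) (iyb p) = 0 := sva (show p+4 ≠ (0:ℕ) by omega)
@[simp] lemma s_x_zb (i : Fin (p+1)) : (Pi.single (ix p) 1 : Vp p) (izb p i) = 0 :=
  sva (show p+5+i.1 ≠ (0:ℕ) by omega)
@[simp] lemma s_y_xb : (Pi.single (iy p) 1 : Vp p) (ixb p) = 0 := sva (show p+3 ≠ (1:ℕ) by omega)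
@[simp] lemma s_y_yb : (Pi.single (iy p) 1 : Vp p) (iyb p) = 0 := sva (show p+4 ≠ (1:ℕ) by omega)
@[simp] lemma s_y_zb (i : Fin (p+1)) : (Pi.single (iy p) 1 : Vp p) (izb p i) = 0 :=
  sva (show p+5+i.1 ≠ (1:ℕ) by omega)
@[simp] lemma s_z_xb (i : Fin (p+1)) : (Pi.single (iz p i) 1 : Vp p) (ixb p) = 0 :=
  sva (show p+3 ≠ 2 + i.1 by have := i.2; omega)
@[simp] lemma s_z_yb (i : Fin (p+1)) : (Pi.single (iz p i) 1 : Vp p) (iyb p) = 0 :=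
  sva (show p+4 ≠ 2 + i.1 by have := i.2; omega)
@[simp] lemma s_z_zb (i j : Fin (p+1)) : (Pi.single (iz p i) 1 : Vp p) (izb p j) = 0 :=
  sva (show p+5+j.1 ≠ 2 + i.1 by have := i.2; omega)
@[simp] lemma s_xb_yb : (Pi.single (ixb p) 1 : Vp p) (iyb p) = 0 := sva (show p+4 ≠ p+3 by omega)
@[simp] lemma s_xb_zb (i : Fin (p+1)) : (Pi.single (ixb p) 1 : Vp p) (izb p i) = 0 :=
  sva (show p+5+i.1 ≠ p+3 by omega)
@[simp] lemma s_z_x (i : Fin (p+1)) : (Pi.single (iz p i) 1 : Vp p) (ix p) = 0 :=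
  sva (show (0:ℕ) ≠ 2 + i.1 by omega)
@[simp] lemma s_xb_xb : (Pi.single (ixb p) 1 : Vp p) (ixb p) = 1 := Pi.single_eq_same _ _
@[simp] lemma s_x_x : (Pi.single (ix p) 1 : Vp p) (ix p) = 1 := Pi.single_eq_same _ _

@[simp] lemma s_y_x : (Pi.single (iy p) 1 : Vp p) (ix p) = 0 := sva (show (0:ℕ) ≠ 1 by omega)

/-- Vectors whose unbarred coordinates vanish. -/
def Wbar (p : ℕ) : Submodule ℝ (Vp p) where
  carrier := {v | v (ix p) = 0 ∧ v (iy p) = 0 ∧ ∀ i, v (iz p i) = 0}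
  add_mem' := by
    rintro a b ⟨h1, h2, h3⟩ ⟨g1, g2, g3⟩
    exact ⟨by simp [h1, g1], by simp [h2, g2], fun i => by simp [h3 i, g3 i]⟩
  zero_mem' := ⟨rfl, rfl, fun _ => rfl⟩
  smul_mem' := by
    rintro c a ⟨h1, h2, h3⟩
    exact ⟨by simp [h1], by simp [h2], fun i => by simp [h3 i]⟩

/-- Vectors whose barred coordinates are determined: x̄-coord = F · x-coord, rest 0. -/
noncomputable def WP (p : ℕ) (f : ℝ → ℝ) (P : Vp p) : Submodule ℝ (Vp p) where
  carrier := {v | v (ixb p) = FF p f P * v (ix p) ∧ v (iyb p) = 0 ∧ ∀ i, v (izb p i) = 0}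
  add_mem' := by
    rintro a b ⟨h1, h2, h3⟩ ⟨g1, g2, g3⟩
    exact ⟨by simp [h1, g1]; ring, by simp [h2, g2], fun i => by simp [h3 i, g3 i]⟩
  zero_mem' := ⟨by simp, rfl, fun _ => rfl⟩
  smul_mem' := by
    rintro c a ⟨h1, h2, h3⟩
    exact ⟨by simp [h1]; ring, by simp [h2], fun i => by simp [h3 i]⟩

lemma Vbar_le_Wbar : Vbar p ≤ Wbar p := by
  rw [Vbar, Submodule.span_le]
  rintro v (h | ⟨i, rfl⟩)
  · rcases h with rfl | rfl
    · exact ⟨s_xb_x, s_xb_y, fun i => s_xb_z i⟩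
    · exact ⟨s_yb_x, s_yb_y, fun i => s_yb_z i⟩
  · exact ⟨s_zb_x i, s_zb_y i, fun j => s_zb_z i j⟩

lemma VP_le_WP (f : ℝ → ℝ) (P : Vp p) : VPspan p f P ≤ WP p f P := by
  rw [VPspan, Submodule.span_le]
  rintro v (h | ⟨i, rfl⟩)
  · rcases h with rfl | rfl
    · exact ⟨by simp, by simp, fun i => by simp⟩
    · exact ⟨by simp, by simp, fun i => by simp⟩
  · exact ⟨by simp, by simp, fun j => by simp⟩

lemma cover (p : ℕ) (a : Fin (2*p+6)) :
    a = ix p ∨ a = iy p ∨ (∃ i, a = iz p i) ∨ a = ixb p ∨ a = iyb p ∨ (∃ i, a = izb p i) := by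
  obtain ⟨n, hn⟩ := a
  by_cases h0 : n = 0
  · exact Or.inl (Fin.ext h0)
  by_cases h1 : n = 1
  · exact Or.inr (Or.inl (Fin.ext h1))
  by_cases h2 : n ≤ p + 2
  · exact Or.inr (Or.inr (Or.inl ⟨⟨n - 2, by omega⟩, Fin.ext (show n = 2 + (n - 2) by omega)⟩))
  by_cases h3 : n = p + 3
  · exact Or.inr (Or.inr (Or.inr (Or.inl (Fin.ext h3))))
  by_cases h4 : n = p + 4
  · exact Or.inr (Or.inr (Or.inr (Or.inr (Or.inl (Fin.ext h4)))))
  · exact Or.inr (Or.inr (Or.inr (Or.inr (Or.inr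
      ⟨⟨n - (p + 5), by omega⟩, Fin.ext (show n = p + 5 + (n - (p + 5)) by omega)⟩))))

end Aux

/-- (i) ℝ^m = 𝒱_P ⊕ 𝒱̄; (ii) both 𝒱_P and 𝒱̄ are totally isotropic for g_P;
(iii) ∇^kR_P vanishes whenever one of its arguments lies in 𝒱̄; consequently each ∇^kR_P
is the pullback, under the projection onto 𝒱_P along 𝒱̄, of a tensor on the totally
isotropic subspace 𝒱_P. -/
theorem totally_isotropic_structure (p : ℕ) (f : ℝ → ℝ) (hf : ContDiff ℝ (⊤ : ℕ∞) f) (P : Vp p) :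
    (VPspan p f P ⊓ Vbar p = ⊥ ∧ VPspan p f P ⊔ Vbar p = ⊤) ∧
    (∀ u ∈ VPspan p f P, ∀ v ∈ VPspan p f P, gP p f P u v = 0) ∧
    (∀ u ∈ Vbar p, ∀ v ∈ Vbar p, gP p f P u v = 0) ∧
    (∀ (k : ℕ) (ξ₁ ξ₂ ξ₃ ξ₄ : Vp p) (η : Fin k → Vp p),
      (ξ₁ ∈ Vbar p ∨ ξ₂ ∈ Vbar p ∨ ξ₃ ∈ Vbar p ∨ ξ₄ ∈ Vbar p ∨ ∃ j, η j ∈ Vbar p) →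
      nR p f k P ξ₁ ξ₂ ξ₃ ξ₄ η = 0) ∧
    (∀ π : Vp p → Vp p, (∀ v : Vp p, π v ∈ VPspan p f P ∧ v - π v ∈ Vbar p) →
      ∀ (k : ℕ) (ξ₁ ξ₂ ξ₃ ξ₄ : Vp p) (η : Fin k → Vp p),
        nR p f k P ξ₁ ξ₂ ξ₃ ξ₄ η
          = nR p f k P (π ξ₁) (π ξ₂) (π ξ₃) (π ξ₄) (fun j => π (η j))) := by
  have hVPW := VP_le_WP (p := p) f P
  have hVbW := Vbar_le_Wbar (p := p)
  refine ⟨⟨?_, ?_⟩, ?_, ?_, ?_, ?_⟩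
  · -- inf = ⊥
    rw [eq_bot_iff]
    intro v hv
    rw [Submodule.mem_inf] at hv
    obtain ⟨hp1, hp2, hp3⟩ := hVPW hv.1
    obtain ⟨hb1, hb2, hb3⟩ := hVbW hv.2
    rw [Submodule.mem_bot]
    funext a
    rcases cover p a with rfl | rfl | ⟨i, rfl⟩ | rfl | rfl | ⟨i, rfl⟩
    · simpa using hb1
    · simpa using hb2
    · simpa using hb3 i
    · simp only [Pi.zero_apply]; rw [hp1, hb1, mul_zero]
    · simpa using hp2
    · simpa using hp3 i
  · -- sup = ⊤
    rw [eq_top_iff]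
    rintro v -
    have hsingle : ∀ a : Fin (2*p+6), (Pi.single a 1 : Vp p) ∈ VPspan p f P ⊔ Vbar p := by
      intro a
      rcases cover p a with rfl | rfl | ⟨i, rfl⟩ | rfl | rfl | ⟨i, rfl⟩
      · have he : (Pi.single (ix p) 1 + FF p f P • (Pi.single (ixb p) 1 : Vp p))
            ∈ VPspan p f P := Submodule.subset_span (Or.inl (Or.inl rfl))
        have hb : (Pi.single (ixb p) 1 : Vp p) ∈ Vbar p :=
          Submodule.subset_span (Or.inl (Or.inl rfl))
        have hx : (Pi.single (ix p) 1 : Vp p)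
            = (Pi.single (ix p) 1 + FF p f P • (Pi.single (ixb p) 1 : Vp p))
              - FF p f P • (Pi.single (ixb p) 1 : Vp p) := by abel
        rw [hx]
        exact Submodule.sub_mem _ (Submodule.mem_sup_left he)
          (Submodule.smul_mem _ _ (Submodule.mem_sup_right hb))
      · exact Submodule.mem_sup_left (Submodule.subset_span (Or.inl (Or.inr rfl)))
      · exact Submodule.mem_sup_left (Submodule.subset_span (Or.inr ⟨i, rfl⟩))
      · exact Submodule.mem_sup_right (Submodule.subset_span (Or.inl (Or.inl rfl)))
      · exact Submodule.mem_sup_right (Submodule.subset_span (Or.inl (Or.inr rfl)))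
      · exact Submodule.mem_sup_right (Submodule.subset_span (Or.inr ⟨i, rfl⟩))
    have hv : v = ∑ a : Fin (2*p+6), v a • (Pi.single a 1 : Vp p) := by
      funext b
      simp [Finset.sum_apply, Pi.single_apply, mul_ite, Finset.sum_ite_eq, Finset.sum_ite_eq']
    rw [hv]
    exact Submodule.sum_mem _ fun a _ => Submodule.smul_mem _ _ (hsingle a)
  · -- VPspan isotropic
    intro u hu v hv
    obtain ⟨hu1, hu2, hu3⟩ := hVPW hu
    obtain ⟨hv1, hv2, hv3⟩ := hVPW hv
    have hs : ∑ i : Fin (p+1), (u (iz p i) * v (izb p i) + u (izb p i) * v (iz p i)) = 0 :=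
      Finset.sum_eq_zero fun i _ => by rw [hu3 i, hv3 i]; ring
    rw [gP, hs, hu1, hu2, hv1, hv2]; ring
  · -- Vbar isotropic
    intro u hu v hv
    obtain ⟨hu1, hu2, hu3⟩ := hVbW hu
    obtain ⟨hv1, hv2, hv3⟩ := hVbW hv
    have hs : ∑ i : Fin (p+1), (u (iz p i) * v (izb p i) + u (izb p i) * v (iz p i)) = 0 :=
      Finset.sum_eq_zero fun i _ => by rw [hu3 i, hv3 i]; ring
    rw [gP, hs, hu1, hu2, hv1, hv2]; ring
  · -- nR vanishes on Vbar arguments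
    rintro k ξ₁ ξ₂ ξ₃ ξ₄ η (h | h | h | h | ⟨j0, h⟩)
    · obtain ⟨h1, h2, h3⟩ := hVbW h
      simp [nR, wdg, h1, h2, h3]
    · obtain ⟨h1, h2, h3⟩ := hVbW h
      simp [nR, wdg, h1, h2, h3]
    · obtain ⟨h1, h2, h3⟩ := hVbW h
      simp [nR, wdg, h1, h2, h3]
    · obtain ⟨h1, h2, h3⟩ := hVbW h
      simp [nR, wdg, h1, h2, h3]
    · obtain ⟨h1, h2, h3⟩ := hVbW h
      have hp0 : ∏ j : Fin k, η j (iy p) = 0 :=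
        Finset.prod_eq_zero (Finset.mem_univ j0) h2
      have hs : ∀ i : Fin (p+1),
          (∑ j : Fin k, η j (iz p i) * ∏ l ∈ Finset.univ.erase j, η l (iy p)) = 0 := by
        intro i
        refine Finset.sum_eq_zero fun j _ => ?_
        by_cases hj : j = j0
        · subst hj; rw [h3 i, zero_mul]
        · rw [Finset.prod_eq_zero
            (Finset.mem_erase.mpr ⟨Ne.symm hj, Finset.mem_univ _⟩) h2, mul_zero]
      simp [nR, hp0, hs]
  · -- pullback along projection
    intro π hπ k ξ₁ ξ₂ ξ₃ ξ₄ η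
    have k1 : ∀ v : Vp p, π v (ix p) = v (ix p) := fun v => by
      have h := (hVbW (hπ v).2).1
      rw [Pi.sub_apply, sub_eq_zero] at h
      exact h.symm
    have k2 : ∀ v : Vp p, π v (iy p) = v (iy p) := fun v => by
      have h := (hVbW (hπ v).2).2.1
      rw [Pi.sub_apply, sub_eq_zero] at h
      exact h.symm
    have k3 : ∀ (v : Vp p) (i : Fin (p+1)), π v (iz p i) = v (iz p i) := fun v i => by
      have h := (hVbW (hπ v).2).2.2 i
      rw [Pi.sub_apply, sub_eq_zero] at h
      exact h.symm
    simp only [nR, wdg, k1, k2, k3]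
end

section
/- Let k ≥ p+1, let P ∈ ℝ^m have y-coordinate y, and let X = a∂x + b∂y and Y = c∂x + d∂y with a, b, c, d ∈ ℝ. Then J_{k,P}(Y)X = (ad − bc)·d^k·f^{(k+2)}(y)·(d∂x̄ − c∂ȳ). -/
section aux

lemma itd_pow (n m : ℕ) :
    iteratedDeriv m (fun t : ℝ => t^n) = fun t => (n.descFactorial m : ℝ) * t^(n-m) := by
  induction m with
  | zero => funext t; simp
  | succ m ih =>
    rw [iteratedDeriv_succ, ih]
    funext t
    rw [deriv_const_mul _ (by fun_prop)]
    simp only [deriv_pow_field, Nat.descFactorial_succ]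
    push_cast
    rw [show n - m - 1 = n - (m+1) by omega]
    ring

lemma itd_pow_zero (n m : ℕ) (h : n < m) : iteratedDeriv m (fun t : ℝ => t^n) = 0 := by
  rw [itd_pow]
  funext t
  simp [Nat.descFactorial_eq_zero_iff_lt.2 h]

end aux



section singles

variable {p : ℕ}

lemma s_ne (t s : Fin (2*p+6)) (h : s.1 ≠ t.1) : (Pi.single t (1:ℝ) : Vp p) s = 0 :=
  Pi.single_eq_of_ne (Fin.ne_of_val_ne h) 1

lemma s_eq (t : Fin (2*p+6)) : (Pi.single t (1:ℝ) : Vp p) t = 1 := Pi.single_eq_same t 1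

variable {f : ℝ → ℝ} {P : Vp p}

lemma L1 (v : Vp p) : gP p f P v (Pi.single (ixb p) 1) = v (ix p) := by
  simp only [gP]
  rw [s_eq, s_ne (ixb p) (ix p) (by show (0:ℕ) ≠ p+3; omega),
    s_ne (ixb p) (iyb p) (by show (p+4:ℕ) ≠ p+3; omega),
    s_ne (ixb p) (iy p) (by show (1:ℕ) ≠ p+3; omega),
    Finset.sum_eq_zero (fun i (_ : i ∈ Finset.univ) => by
      rw [s_ne (ixb p) (izb p i) (by show (p+5+i.1:ℕ) ≠ p+3; omega),
        s_ne (ixb p) (iz p i) (by show (2+i.1:ℕ) ≠ p+3; have := i.2; omega)]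
      ring)]
  ring

lemma L2 (v : Vp p) : gP p f P v (Pi.single (iyb p) 1) = v (iy p) := by
  simp only [gP]
  rw [s_eq, s_ne (iyb p) (ixb p) (by show (p+3:ℕ) ≠ p+4; omega),
    s_ne (iyb p) (ix p) (by show (0:ℕ) ≠ p+4; omega),
    s_ne (iyb p) (iy p) (by show (1:ℕ) ≠ p+4; omega),
    Finset.sum_eq_zero (fun i (_ : i ∈ Finset.univ) => by
      rw [s_ne (iyb p) (izb p i) (by show (p+5+i.1:ℕ) ≠ p+4; omega),
        s_ne (iyb p) (iz p i) (by show (2+i.1:ℕ) ≠ p+4; have := i.2; omega)]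
      ring)]
  ring

lemma L3 (i : Fin (p+1)) (v : Vp p) :
    gP p f P v (Pi.single (izb p i) 1) = v (iz p i) := by
  simp only [gP]
  rw [s_ne (izb p i) (ixb p) (by show (p+3:ℕ) ≠ p+5+i.1; omega),
    s_ne (izb p i) (ix p) (by show (0:ℕ) ≠ p+5+i.1; omega),
    s_ne (izb p i) (iyb p) (by show (p+4:ℕ) ≠ p+5+i.1; omega),
    s_ne (izb p i) (iy p) (by show (1:ℕ) ≠ p+5+i.1; omega),
    Finset.sum_eq_single i
      (fun i' _ hne => by
        rw [s_ne (izb p i) (izb p i') (by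
            show (p+5+i'.1:ℕ) ≠ p+5+i.1
            intro hh; exact hne (Fin.ext (by omega))),
          s_ne (izb p i) (iz p i') (by show (2+i'.1:ℕ) ≠ p+5+i.1; have := i'.2; omega)]
        ring)
      (fun h => absurd (Finset.mem_univ i) h),
    s_eq, s_ne (izb p i) (iz p i) (by show (2+i.1:ℕ) ≠ p+5+i.1; have := i.2; omega)]
  ring

lemma L4 (v : Vp p) :
    gP p f P v (Pi.single (ix p) 1) = v (ixb p) - 2 * FF p f P * v (ix p) := by
  simp only [gP]
  rw [s_eq, s_ne (ix p) (ixb p) (by show (p+3:ℕ) ≠ 0; omega),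
    s_ne (ix p) (iyb p) (by show (p+4:ℕ) ≠ 0; omega),
    s_ne (ix p) (iy p) (by show (1:ℕ) ≠ 0; omega),
    Finset.sum_eq_zero (fun i (_ : i ∈ Finset.univ) => by
      rw [s_ne (ix p) (izb p i) (by show (p+5+i.1:ℕ) ≠ 0; omega),
        s_ne (ix p) (iz p i) (by show (2+i.1:ℕ) ≠ 0; omega)]
      ring)]
  ring

lemma L5 (v : Vp p) : gP p f P v (Pi.single (iy p) 1) = v (iyb p) := by
  simp only [gP]
  rw [s_eq, s_ne (iy p) (ixb p) (by show (p+3:ℕ) ≠ 1; omega),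
    s_ne (iy p) (ix p) (by show (0:ℕ) ≠ 1; omega),
    s_ne (iy p) (iyb p) (by show (p+4:ℕ) ≠ 1; omega),
    Finset.sum_eq_zero (fun i (_ : i ∈ Finset.univ) => by
      rw [s_ne (iy p) (izb p i) (by show (p+5+i.1:ℕ) ≠ 1; omega),
        s_ne (iy p) (iz p i) (by show (2+i.1:ℕ) ≠ 1; omega)]
      ring)]
  ring

lemma L6 (i : Fin (p+1)) (v : Vp p) :
    gP p f P v (Pi.single (iz p i) 1) = v (izb p i) := by
  simp only [gP]
  rw [s_ne (iz p i) (ixb p) (by show (p+3:ℕ) ≠ 2+i.1; have := i.2; omega),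
    s_ne (iz p i) (ix p) (by show (0:ℕ) ≠ 2+i.1; omega),
    s_ne (iz p i) (iyb p) (by show (p+4:ℕ) ≠ 2+i.1; have := i.2; omega),
    s_ne (iz p i) (iy p) (by show (1:ℕ) ≠ 2+i.1; omega),
    Finset.sum_eq_single i
      (fun i' _ hne => by
        rw [s_ne (iz p i) (izb p i') (by show (p+5+i'.1:ℕ) ≠ 2+i.1; have := i.2; omega),
          s_ne (iz p i) (iz p i') (by
            show (2+i'.1:ℕ) ≠ 2+i.1
            intro hh; exact hne (Fin.ext (by omega)))]
        ring)
      (fun h => absurd (Finset.mem_univ i) h),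
    s_eq, s_ne (iz p i) (izb p i) (by show (p+5+i.1:ℕ) ≠ 2+i.1; have := i.2; omega)]
  ring

end singles

/-- for k ≥ p+1, if ∇^k𝓡_P is the (unique) operator with
g_P(∇^k𝓡_P(ξ₁,ξ₂;η₁,…,η_k)ξ₃, ξ₄) = ∇^kR_P(ξ₁,ξ₂,ξ₃,ξ₄;η₁,…,η_k), then the generalized
Jacobi operator J_{k,P}(Y) : X ↦ ∇^k𝓡_P(X,Y;Y,…,Y)Y satisfies, for
X = a∂x + b∂y and Y = c∂x + d∂y,
J_{k,P}(Y)X = (ad - bc)·d^k·f^{(k+2)}(y)·(d∂x̄ - c∂ȳ). -/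
theorem generalized_Jacobi_formula (p : ℕ) (f : ℝ → ℝ) (hf : ContDiff ℝ (⊤ : ℕ∞) f)
    (k : ℕ) (hk : p + 1 ≤ k) (P : Vp p) (a b c d : ℝ)
    (X Y : Vp p)
    (hX : X = a • (Pi.single (ix p) 1 : Vp p) + b • (Pi.single (iy p) 1 : Vp p))
    (hY : Y = c • (Pi.single (ix p) 1 : Vp p) + d • (Pi.single (iy p) 1 : Vp p))
    (opK : Vp p → Vp p → (Fin k → Vp p) → Vp p → Vp p)
    (hop : ∀ (ξ₁ ξ₂ : Vp p) (η : Fin k → Vp p) (ξ₃ ξ₄ : Vp p),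
      gP p f P (opK ξ₁ ξ₂ η ξ₃) ξ₄ = nR p f k P ξ₁ ξ₂ ξ₃ ξ₄ η) :
    opK X Y (fun _ => Y) Y
      = ((a*d - b*c) * d^k * iteratedDeriv (k+2) f (P (iy p))) •
          (d • (Pi.single (ixb p) 1 : Vp p) - c • (Pi.single (iyb p) 1 : Vp p)) := by
  set w : Vp p := ((a*d - b*c) * d^k * iteratedDeriv (k+2) f (P (iy p))) •
      (d • (Pi.single (ixb p) 1 : Vp p) - c • (Pi.single (iyb p) 1 : Vp p)) with hwdef
  have hXx : X (ix p) = a := by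
    rw [hX]; simp only [Pi.add_apply, Pi.smul_apply, smul_eq_mul]
    rw [s_eq, s_ne (iy p) (ix p) (by show (0:ℕ) ≠ 1; omega)]; ring
  have hXy : X (iy p) = b := by
    rw [hX]; simp only [Pi.add_apply, Pi.smul_apply, smul_eq_mul]
    rw [s_eq, s_ne (ix p) (iy p) (by show (1:ℕ) ≠ 0; omega)]; ring
  have hYx : Y (ix p) = c := by
    rw [hY]; simp only [Pi.add_apply, Pi.smul_apply, smul_eq_mul]
    rw [s_eq, s_ne (iy p) (ix p) (by show (0:ℕ) ≠ 1; omega)]; ring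
  have hYy : Y (iy p) = d := by
    rw [hY]; simp only [Pi.add_apply, Pi.smul_apply, smul_eq_mul]
    rw [s_eq, s_ne (ix p) (iy p) (by show (1:ℕ) ≠ 0; omega)]; ring
  have hD1 : ∀ i : Fin (p+1),
      iteratedDeriv (k+1) (fun t : ℝ => t^(i.1+1)) (P (iy p)) = 0 := by
    intro i
    rw [itd_pow_zero (i.1+1) (k+1) (by have := i.2; omega)]
    rfl
  have hD2 : ∀ i : Fin (p+1),
      iteratedDeriv (k+2) (fun t : ℝ => t^(i.1+1)) (P (iy p)) = 0 := by
    intro i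
    rw [itd_pow_zero (i.1+1) (k+2) (by have := i.2; omega)]
    rfl
  -- components of w
  have hwix : w (ix p) = 0 := by
    rw [hwdef]; simp only [Pi.smul_apply, Pi.sub_apply, smul_eq_mul]
    rw [s_ne (ixb p) (ix p) (by show (0:ℕ) ≠ p+3; omega),
      s_ne (iyb p) (ix p) (by show (0:ℕ) ≠ p+4; omega)]; ring
  have hwiy : w (iy p) = 0 := by
    rw [hwdef]; simp only [Pi.smul_apply, Pi.sub_apply, smul_eq_mul]
    rw [s_ne (ixb p) (iy p) (by show (1:ℕ) ≠ p+3; omega),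
      s_ne (iyb p) (iy p) (by show (1:ℕ) ≠ p+4; omega)]; ring
  have hwixb : w (ixb p) = (a*d - b*c) * d^k * iteratedDeriv (k+2) f (P (iy p)) * d := by
    rw [hwdef]; simp only [Pi.smul_apply, Pi.sub_apply, smul_eq_mul]
    rw [s_eq, s_ne (iyb p) (ixb p) (by show (p+3:ℕ) ≠ p+4; omega)]; ring
  have hwiyb : w (iyb p) = -((a*d - b*c) * d^k * iteratedDeriv (k+2) f (P (iy p)) * c) := by
    rw [hwdef]; simp only [Pi.smul_apply, Pi.sub_apply, smul_eq_mul]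
    rw [s_eq, s_ne (ixb p) (iyb p) (by show (p+4:ℕ) ≠ p+3; omega)]; ring
  have hwiz : ∀ i : Fin (p+1), w (iz p i) = 0 := by
    intro i
    rw [hwdef]; simp only [Pi.smul_apply, Pi.sub_apply, smul_eq_mul]
    rw [s_ne (ixb p) (iz p i) (by show (2+i.1:ℕ) ≠ p+3; have := i.2; omega),
      s_ne (iyb p) (iz p i) (by show (2+i.1:ℕ) ≠ p+4; have := i.2; omega)]; ring
  have hwizb : ∀ i : Fin (p+1), w (izb p i) = 0 := by
    intro i
    rw [hwdef]; simp only [Pi.smul_apply, Pi.sub_apply, smul_eq_mul]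
    rw [s_ne (ixb p) (izb p i) (by show (p+5+i.1:ℕ) ≠ p+3; omega),
      s_ne (iyb p) (izb p i) (by show (p+5+i.1:ℕ) ≠ p+4; omega)]; ring
  have key : ∀ ξ : Vp p,
      gP p f P (opK X Y (fun _ => Y) Y) ξ = gP p f P w ξ := by
    intro ξ
    rw [hop]
    have hL : nR p f k P X Y Y ξ (fun _ => Y)
        = (a*d - b*c) * d^k * iteratedDeriv (k+2) f (P (iy p))
            * (d * ξ (ix p) - c * ξ (iy p)) := by
      simp only [nR, wdg, hXx, hXy, hYx, hYy, hD1, hD2, zero_mul, mul_zero,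
        Finset.sum_const_zero, add_zero, zero_add, Finset.prod_const,
        Finset.card_univ, Fintype.card_fin]
      ring
    have hR : gP p f P w ξ
        = (a*d - b*c) * d^k * iteratedDeriv (k+2) f (P (iy p))
            * (d * ξ (ix p) - c * ξ (iy p)) := by
      simp only [gP, hwix, hwiy, hwixb, hwiyb, hwiz, hwizb, zero_mul, mul_zero,
        add_zero, zero_add, Finset.sum_const_zero]
      ring
    rw [hL, hR]
  funext j
  obtain ⟨jv, hjv⟩ := j
  have hcase : jv = 0 ∨ jv = 1 ∨ (2 ≤ jv ∧ jv ≤ p+2) ∨ jv = p+3 ∨ jv = p+4 ∨ p+5 ≤ jv := by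
    omega
  rcases hcase with rfl | rfl | ⟨h2, h3⟩ | rfl | rfl | h5
  · have h := key (Pi.single (ixb p) 1)
    rw [L1, L1] at h
    exact h
  · have h := key (Pi.single (iyb p) 1)
    rw [L2, L2] at h
    exact h
  · have hje : (⟨jv, hjv⟩ : Fin (2*p+6)) = iz p ⟨jv - 2, by omega⟩ :=
      Fin.ext (by show jv = 2 + (jv - 2); omega)
    rw [hje]
    have h := key (Pi.single (izb p ⟨jv - 2, by omega⟩) 1)
    rw [L3, L3] at h
    exact h
  · have h0 := key (Pi.single (ixb p) 1)
    rw [L1, L1] at h0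
    have h1 := key (Pi.single (ix p) 1)
    rw [L4, L4] at h1
    rw [h0] at h1
    have : opK X Y (fun _ => Y) Y (ixb p) = w (ixb p) := by linarith
    exact this
  · have h := key (Pi.single (iy p) 1)
    rw [L5, L5] at h
    exact h
  · have hje : (⟨jv, hjv⟩ : Fin (2*p+6)) = izb p ⟨jv - (p+5), by omega⟩ :=
      Fin.ext (by show jv = p + 5 + (jv - (p+5)); omega)
    rw [hje]
    have h := key (Pi.single (iz p ⟨jv - (p+5), by omega⟩) 1)
    rw [L6, L6] at h
    exact h
end
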